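/- arXiv:2111.11864 — 5 statements merged into one kernel-verified Lean document; each statement's English description precedes it below -/
import Mathlib

section
/- For integers m ≥ 1, n ≥ 0, sequences of nonnegative integers a_i and c_i, and rationals x_i, the sum over all tuples (k_1,...,k_m) with ∑ k_i = n of [∏ C(a_i,k_i)C(k_i,c_i)] * (∑ x_i k_i)^3, multiplied by (A_0-C_0)(A_0-C_0-1)(A_0-C_0-2), equals C(A_0-C_0, n-C_0) * [∏ C(a_i,c_i)] * { (n-C_0)(n-C_0-1)[(n-C_0-2)A_1^3 + (A_0-n)(C_3 - A_3 + 3 A_1 (A_2 - C_2 + A_1 C_1))] + (A_0-n)(A_0-n-1)[(A_0-n-2)C_1^3 + (n-C_0)(A_3 - C_3 + 3 C_1 (A_2 - C_2 + A_1 C_1))] }. -/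
open Finset

/-- Binomial coefficient with integer arguments, zero when `k < 0` or `k > n`. -/
def ch (n k : ℤ) : ℚ := if 0 ≤ k ∧ k ≤ n then (n.toNat.choose k.toNat : ℚ) else 0

section Helpers
variable {ι : Type*} [DecidableEq ι]
lemma ch_nat (p q : ℕ) : ch (p:ℤ) (q:ℤ) = (p.choose q : ℚ) := by
  unfold ch
  split
  · next h => simp
  · next h =>
    push_neg at h
    have : p < q := by
      by_contra hc
      exact absurd (Int.ofNat_le.mpr (not_lt.mp hc)) (not_le.mpr (h (Int.ofNat_nonneg q)))
    rw [Nat.choose_eq_zero_of_lt this]; simp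

lemma ch_neg {n k : ℤ} (h : k < 0) : ch n k = 0 := by
  unfold ch; rw [if_neg]; rintro ⟨h1, -⟩; omega

lemma ch_gt {n k : ℤ} (h : n < k) : ch n k = 0 := by
  unfold ch; rw [if_neg]; rintro ⟨-, h2⟩; omega

lemma ch_ratio (b M : ℤ) : ch (b-1) (M-1) * (b:ℚ) = ch b M * (M:ℚ) := by
  by_cases h : 1 ≤ M ∧ M ≤ b
  · obtain ⟨h1, h2⟩ := h
    obtain ⟨p, rfl⟩ : ∃ p : ℕ, b = (p:ℤ) := ⟨b.toNat, by omega⟩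
    obtain ⟨q, rfl⟩ : ∃ q : ℕ, M = (q:ℤ) := ⟨M.toNat, by omega⟩
    obtain ⟨p', rfl⟩ : ∃ p' : ℕ, p = p' + 1 := ⟨p - 1, by omega⟩
    obtain ⟨q', rfl⟩ : ∃ q' : ℕ, q = q' + 1 := ⟨q - 1, by omega⟩
    have e1 : ((p':ℕ):ℤ) + 1 - 1 = ((p':ℕ) : ℤ) := by ring
    have e2 : ((q':ℕ):ℤ) + 1 - 1 = ((q':ℕ) : ℤ) := by ring
    have e3 : ((p':ℕ):ℤ) + 1 = (((p'+1:ℕ)):ℤ) := by push_cast; ring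
    have e4 : ((q':ℕ):ℤ) + 1 = (((q'+1:ℕ)):ℤ) := by push_cast; ring
    push_cast
    rw [e1, e2, e3, e4, ch_nat, ch_nat]
    have := Nat.add_one_mul_choose_eq p' q'
    have : ((p' + 1) * p'.choose q' : ℚ) = ((p' + 1).choose (q' + 1) * (q' + 1) : ℕ) := by
      exact_mod_cast congrArg (Nat.cast : ℕ → ℚ) this
    push_cast at this ⊢
    linarith
  · rcases le_or_gt M 0 with hM | hM
    · rw [ch_neg (by omega : M - 1 < 0)]
      rcases eq_or_lt_of_le hM with rfl | hM'
      · simp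
      · rw [ch_neg hM']; ring
    · rw [ch_gt (by omega : b - 1 < M - 1), ch_gt (by omega : b < M)]; ring


-- C(α,p) C(p,γ) = C(α,γ) C(α-γ, p-γ)
lemma ch_split (α γ p : ℕ) : ch α p * ch p γ = ch α γ * ch ((α:ℤ) - γ) ((p:ℤ) - γ) := by
  by_cases h : γ ≤ p ∧ p ≤ α
  · obtain ⟨h1, h2⟩ := h
    have e1 : (α:ℤ) - γ = ((α - γ : ℕ) : ℤ) := by omega
    have e2 : (p:ℤ) - γ = ((p - γ : ℕ) : ℤ) := by omega
    rw [e1, e2, ch_nat, ch_nat, ch_nat, ch_nat]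
    have := Nat.choose_mul (n := α) h1
    exact_mod_cast congrArg (Nat.cast : ℕ → ℚ) this
  · rcases not_and_or.mp h with h' | h'
    · rw [ch_gt (by exact_mod_cast not_le.mp h' : (p:ℤ) < γ),
          ch_neg (by have := not_le.mp h'; omega : (p:ℤ) - γ < 0)]
      ring
    · rw [ch_gt (by exact_mod_cast not_le.mp h' : (α:ℤ) < p),
          ch_gt (by have := not_le.mp h'; omega : (α:ℤ) - γ < (p:ℤ) - γ)]
      ring

-- (c+1) * C(a, c+1) = (a - c) * C(a, c)   in ℚ
lemma ch_step (a c : ℕ) : ((c:ℚ)+1) * ch a ((c:ℤ)+1) = ((a:ℚ) - c) * ch a c := by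
  have e : (c:ℤ) + 1 = ((c+1:ℕ):ℤ) := by push_cast; ring
  rw [e, ch_nat, ch_nat]
  by_cases h : c ≤ a
  · have := Nat.choose_succ_right_eq a c
    have h2 : (a.choose (c+1) * (c+1) : ℚ) = (a.choose c : ℚ) * ((a:ℚ) - c) := by
      have : ((a.choose (c+1) * (c+1) : ℕ) : ℚ) = ((a.choose c * (a - c) : ℕ) : ℚ) := by
        exact_mod_cast congrArg (Nat.cast : ℕ → ℚ) this
      push_cast at this
      rw [this]
      push_cast [Nat.cast_sub h]
      ring
    linarith
  · rw [Nat.choose_eq_zero_of_lt (by omega), Nat.choose_eq_zero_of_lt (by omega)]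
    simp

-- k * C(k,c) = c * C(k,c) + (c+1) * C(k, c+1)
lemma k_mul_ch (k c : ℕ) : (k:ℚ) * ch k c = (c:ℚ) * ch k c + ((c:ℚ)+1) * ch k ((c:ℤ)+1) := by
  rw [ch_step]
  ring


lemma vand (β q γ d n : ℕ) :
    ∑ p ∈ Finset.HasAntidiagonal.antidiagonal n, ch β ((p.1:ℤ) - γ) * ch q ((p.2:ℤ) - d)
    = ch ((β:ℤ) + q) ((n:ℤ) - γ - d) := by
  by_cases hn : γ + d ≤ n
  · set N := n - γ - d with hN
    have key : (Finset.HasAntidiagonal.antidiagonal N).map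
        ⟨fun p => (p.1 + γ, p.2 + d), @id (Function.Injective (fun p : ℕ × ℕ => (p.1 + γ, p.2 + d))) (by intro p r h; simp at h; exact Prod.ext h.1 h.2)⟩
        ⊆ Finset.HasAntidiagonal.antidiagonal n := by
      intro p hp
      simp only [mem_map, Finset.HasAntidiagonal.mem_antidiagonal, Function.Embedding.coeFn_mk] at hp ⊢
      obtain ⟨r, hr, rfl⟩ := hp
      omega
    rw [← Finset.sum_subset key ?van]
    · rw [Finset.sum_map]
      simp only [Function.Embedding.coeFn_mk]
      have : ∀ r ∈ Finset.HasAntidiagonal.antidiagonal N,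
          ch β ((↑(r.1 + γ):ℤ) - γ) * ch q ((↑(r.2 + d):ℤ) - d)
          = ((β.choose r.1 * q.choose r.2 : ℕ) : ℚ) := by
        intro r _
        have e1 : ((r.1 + γ : ℕ):ℤ) - γ = ((r.1:ℕ):ℤ) := by push_cast; ring
        have e2 : ((r.2 + d : ℕ):ℤ) - d = ((r.2:ℕ):ℤ) := by push_cast; ring
        rw [e1, e2, ch_nat, ch_nat]; push_cast; ring
      rw [Finset.sum_congr rfl this]
      have e3 : (n:ℤ) - γ - d = ((N:ℕ):ℤ) := by omega
      have e4 : (β:ℤ) + q = ((β + q : ℕ):ℤ) := by push_cast; ring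
      rw [e3, e4, ch_nat, ← Nat.cast_sum]
      rw [← Nat.add_choose_eq]
    case van =>
      intro p hp hnp
      simp only [Finset.HasAntidiagonal.mem_antidiagonal] at hp
      by_cases h1 : γ ≤ p.1
      · by_cases h2 : d ≤ p.2
        · exfalso; apply hnp
          simp only [mem_map, Finset.HasAntidiagonal.mem_antidiagonal, Function.Embedding.coeFn_mk]
          exact ⟨(p.1 - γ, p.2 - d), by omega, by ext <;> simp <;> omega⟩
        · rw [ch_neg (by omega : (p.2:ℤ) - d < 0)]; ring
      · rw [ch_neg (by omega : (p.1:ℤ) - γ < 0)]; ring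
  · have : ∀ p ∈ Finset.HasAntidiagonal.antidiagonal n,
        ch β ((p.1:ℤ) - γ) * ch q ((p.2:ℤ) - d) = 0 := by
      intro p hp
      simp only [Finset.HasAntidiagonal.mem_antidiagonal] at hp
      by_cases h1 : γ ≤ p.1
      · rw [ch_neg (by omega : (p.2:ℤ) - d < 0)]; ring
      · rw [ch_neg (by omega : (p.1:ℤ) - γ < 0)]; ring
    rw [Finset.sum_congr rfl this, Finset.sum_const, smul_zero,
        ch_neg (by omega : (n:ℤ) - γ - d < 0)]


lemma head_zero {α γ : ℕ} (h : α < γ) (p : ℕ) : ch α p * ch p γ = 0 := by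
  rcases le_or_gt (p:ℤ) α with hp | hp
  · rw [ch_gt (by omega : (p:ℤ) < γ)]; ring
  · rw [ch_gt hp]; ring

lemma L0 {ι : Type*} [DecidableEq ι] (s : Finset ι) (n : ℕ) (a c : ι → ℕ) :
    ∑ k ∈ s.piAntidiag n, ∏ i ∈ s, ch (a i) (k i) * ch (k i) (c i)
    = ch ((∑ i ∈ s, (a i:ℤ)) - ∑ i ∈ s, (c i:ℤ)) ((n:ℤ) - ∑ i ∈ s, (c i:ℤ))
      * ∏ i ∈ s, ch (a i) (c i) := by
  induction s using Finset.cons_induction generalizing n with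
  | empty =>
    rw [Finset.piAntidiag_empty]
    simp only [Finset.sum_empty, Int.ofNat_zero, sub_zero, Finset.prod_empty, mul_one]
    split
    · next h => subst h; norm_num [ch]
    · next h =>
      rw [Finset.sum_empty, ch_gt (by omega : (0:ℤ) < (n:ℤ))]
  | cons i s hi ih =>
    rw [Finset.piAntidiag_cons hi, Finset.sum_disjiUnion]
    have inner : ∀ p ∈ Finset.HasAntidiagonal.antidiagonal n,
        (∑ k ∈ (s.piAntidiag p.2).map (addRightEmbedding fun t => if t = i then p.1 else 0),
          ∏ t ∈ Finset.cons i s hi, ch (a t) (k t) * ch (k t) (c t))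
        = ch (a i) p.1 * ch p.1 (c i) *
          (ch ((∑ t ∈ s, (a t:ℤ)) - ∑ t ∈ s, (c t:ℤ)) ((p.2:ℤ) - ∑ t ∈ s, (c t:ℤ))
            * ∏ t ∈ s, ch (a t) (c t)) := by
      intro p _
      rw [Finset.sum_map]
      have : ∀ k ∈ s.piAntidiag p.2,
          (∏ t ∈ Finset.cons i s hi,
            ch (a t) (((addRightEmbedding fun t => if t = i then p.1 else 0) k) t)
              * ch (((addRightEmbedding fun t => if t = i then p.1 else 0) k) t) (c t))
          = ch (a i) p.1 * ch p.1 (c i) * ∏ t ∈ s, ch (a t) (k t) * ch (k t) (c t) := by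
        intro k hk
        rw [Finset.mem_piAntidiag] at hk
        have hki : k i = 0 := by
          by_contra hne
          exact hi (hk.2 i hne)
        rw [Finset.prod_cons]
        congr 1
        · simp [addRightEmbedding, hki]
        · refine Finset.prod_congr rfl fun t ht => ?_
          have : t ≠ i := fun h => hi (h ▸ ht)
          simp [addRightEmbedding, this]
      rw [Finset.sum_congr rfl this, ← Finset.mul_sum, ih p.2]
    rw [Finset.sum_congr rfl inner]
    by_cases hs : ∀ t ∈ s, c t ≤ a t
    · by_cases hic : c i ≤ a i
      · have hq : (∑ t ∈ s, (a t:ℤ)) - ∑ t ∈ s, (c t:ℤ) = ((∑ t ∈ s, (a t - c t) : ℕ) : ℤ) := by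
          rw [Nat.cast_sum, ← Finset.sum_sub_distrib]
          exact Finset.sum_congr rfl fun t ht => by
            have := hs t ht; omega
        set q : ℕ := ∑ t ∈ s, (a t - c t) with hqdef
        calc ∑ p ∈ Finset.HasAntidiagonal.antidiagonal n, ch (a i) p.1 * ch p.1 (c i) *
                (ch ((∑ t ∈ s, (a t:ℤ)) - ∑ t ∈ s, (c t:ℤ)) ((p.2:ℤ) - ∑ t ∈ s, (c t:ℤ))
                  * ∏ t ∈ s, ch (a t) (c t))
            = (ch (a i) (c i) * ∏ t ∈ s, ch (a t) (c t)) *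
              ∑ p ∈ Finset.HasAntidiagonal.antidiagonal n,
                ch ((a i:ℤ) - c i) ((p.1:ℤ) - c i) * ch (q:ℤ) ((p.2:ℤ) - ∑ t ∈ s, (c t:ℕ)) := by
              rw [Finset.mul_sum]
              refine Finset.sum_congr rfl fun p _ => ?_
              rw [hq, ch_split (a i) (c i) p.1]
              push_cast
              ring
          _ = ch ((∑ t ∈ Finset.cons i s hi, (a t:ℤ)) - ∑ t ∈ Finset.cons i s hi, (c t:ℤ))
                ((n:ℤ) - ∑ t ∈ Finset.cons i s hi, (c t:ℤ)) * ∏ t ∈ Finset.cons i s hi, ch (a t) (c t) := by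
              have e1 : (a i:ℤ) - c i = (((a i - c i : ℕ)):ℤ) := by omega
              have hv := vand (a i - c i) q (c i) (∑ t ∈ s, c t) n
              simp only [e1]
              rw [hv]
              rw [Finset.prod_cons, Finset.sum_cons, Finset.sum_cons]
              have e2 : (((a i - c i : ℕ)):ℤ) + q = ((a i:ℤ) + ∑ t ∈ s, (a t:ℤ)) - ((c i:ℤ) + ∑ t ∈ s, (c t:ℤ)) := by
                rw [← hq]; omega
              have e3 : (n:ℤ) - (c i) - ((∑ t ∈ s, c t : ℕ):ℤ) = (n:ℤ) - ((c i:ℤ) + ∑ t ∈ s, (c t:ℤ)) := by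
                push_cast; ring
              rw [e2, e3]
              ring
      · have hz : ch ((a i:ℤ)) ((c i:ℤ)) = 0 := ch_gt (by exact_mod_cast not_le.mp hic)
        rw [Finset.sum_eq_zero fun p _ => by rw [head_zero (not_le.mp hic), zero_mul]]
        rw [Finset.prod_cons, hz]
        ring
    · push_neg at hs
      obtain ⟨t, ht, hlt⟩ := hs
      have hz : (∏ t ∈ s, ch (a t) (c t)) = 0 :=
        Finset.prod_eq_zero ht (ch_gt (by exact_mod_cast hlt))
      rw [Finset.sum_eq_zero fun p _ => by rw [hz, mul_zero, mul_zero]]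
      rw [Finset.prod_cons, hz]
      ring


def T (s : Finset ι) (n : ℕ) (a c : ι → ℕ) (Φ : (ι → ℕ) → ℚ) : ℚ :=
  ∑ k ∈ s.piAntidiag n, (∏ i ∈ s, ch (a i) (k i) * ch (k i) (c i)) * Φ k

lemma T_step (s : Finset ι) (n : ℕ) (a c : ι → ℕ) {t : ι} (ht : t ∈ s) (Φ : (ι → ℕ) → ℚ) :
    T s n a c (fun k => (k t : ℚ) * Φ k)
    = (c t : ℚ) * T s n a c Φ
      + ((c t : ℚ) + 1) * T s n a (Function.update c t (c t + 1)) Φ := by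
  unfold T
  rw [Finset.mul_sum, Finset.mul_sum, ← Finset.sum_add_distrib]
  refine Finset.sum_congr rfl fun k _ => ?_
  have herase : ∏ i ∈ s.erase t, ch (a i) (k i) * ch (k i) ((Function.update c t (c t + 1)) i)
      = ∏ i ∈ s.erase t, ch (a i) (k i) * ch (k i) (c i) :=
    Finset.prod_congr rfl fun i hi => by rw [Function.update_of_ne (Finset.mem_erase.mp hi).1]
  have key : (∏ i ∈ s, ch (a i) (k i) * ch (k i) (c i)) * (k t : ℚ)
      = (c t : ℚ) * (∏ i ∈ s, ch (a i) (k i) * ch (k i) (c i))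
        + ((c t:ℚ) + 1) * ∏ i ∈ s, ch (a i) (k i) * ch (k i) ((Function.update c t (c t + 1)) i) := by
    rw [← Finset.mul_prod_erase s _ ht,
        ← Finset.mul_prod_erase s (fun i => ch (a i) (k i) * ch (k i) ((Function.update c t (c t + 1)) i)) ht,
        herase, Function.update_self]
    have e : ((c t + 1 : ℕ) : ℤ) = (c t : ℤ) + 1 := by push_cast; ring
    rw [e]
    linear_combination (ch (a t) (k t) * ∏ i ∈ s.erase t, ch (a i) (k i) * ch (k i) (c i)) * k_mul_ch (k t) (c t)
  linear_combination (Φ k) * key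

lemma T_mul (s : Finset ι) (n : ℕ) (a c : ι → ℕ) (x : ι → ℚ) (Φ : (ι → ℕ) → ℚ) :
    T s n a c (fun k => (∑ t ∈ s, x t * (k t : ℚ)) * Φ k)
    = ∑ t ∈ s, x t * ((c t : ℚ) * T s n a c Φ
        + ((c t : ℚ) + 1) * T s n a (Function.update c t (c t + 1)) Φ) := by
  unfold T
  calc ∑ k ∈ s.piAntidiag n, (∏ i ∈ s, ch (a i) (k i) * ch (k i) (c i)) * ((∑ t ∈ s, x t * (k t:ℚ)) * Φ k)
      = ∑ k ∈ s.piAntidiag n, ∑ t ∈ s, x t * ((∏ i ∈ s, ch (a i) (k i) * ch (k i) (c i)) * ((k t:ℚ) * Φ k)) := by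
        refine Finset.sum_congr rfl fun k _ => ?_
        rw [Finset.sum_mul, Finset.mul_sum]
        refine Finset.sum_congr rfl fun t _ => by ring
    _ = ∑ t ∈ s, ∑ k ∈ s.piAntidiag n, x t * ((∏ i ∈ s, ch (a i) (k i) * ch (k i) (c i)) * ((k t:ℚ) * Φ k)) :=
        Finset.sum_comm
    _ = ∑ t ∈ s, x t * ((c t : ℚ) * T s n a c Φ
        + ((c t : ℚ) + 1) * T s n a (Function.update c t (c t + 1)) Φ) := by
        refine Finset.sum_congr rfl fun t ht => ?_
        rw [← Finset.mul_sum]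
        congr 1
        exact T_step s n a c ht Φ

-- generic update-sum helper
lemma sum_update {M : Type*} [AddCommGroup M] (s : Finset ι) {t : ι} (ht : t ∈ s)
    (F : ι → ℕ → M) (g : ι → ℕ) (v : ℕ) :
    ∑ i ∈ s, F i (Function.update g t v i) = (∑ i ∈ s, F i (g i)) + (F t v - F t (g t)) := by
  rw [← Finset.add_sum_erase _ _ ht, ← Finset.add_sum_erase _ (fun i => F i (g i)) ht,
      Function.update_self,
      Finset.sum_congr rfl fun i hi => by rw [Function.update_of_ne (Finset.mem_erase.mp hi).1]]
  abel

lemma prod_update_ch (s : Finset ι) {t : ι} (ht : t ∈ s) (a c : ι → ℕ) :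
    ((c t:ℚ) + 1) * ∏ i ∈ s, ch (a i) (Function.update c t (c t + 1) i)
    = ((a t:ℚ) - c t) * ∏ i ∈ s, ch (a i) (c i) := by
  rw [← Finset.mul_prod_erase s _ ht, ← Finset.mul_prod_erase s (fun i => ch (a i) (c i)) ht,
      Function.update_self,
      Finset.prod_congr rfl fun i hi => by rw [Function.update_of_ne (Finset.mem_erase.mp hi).1]]
  have e : ((c t + 1 : ℕ) : ℤ) = (c t : ℤ) + 1 := by push_cast; ring
  rw [e]
  linear_combination (∏ i ∈ s.erase t, ch (a i) (c i)) * ch_step (a t) (c t)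

lemma S0 (s : Finset ι) (n : ℕ) (a c : ι → ℕ) :
    T s n a c (fun _ => 1)
    = ch ((∑ i ∈ s, (a i:ℤ)) - ∑ i ∈ s, (c i:ℤ)) ((n:ℤ) - ∑ i ∈ s, (c i:ℤ))
      * ∏ i ∈ s, ch (a i) (c i) := by
  unfold T
  rw [← L0]
  exact Finset.sum_congr rfl fun k _ => by simp

lemma S1 (s : Finset ι) (n : ℕ) (a c : ι → ℕ) (x : ι → ℚ) :
    T s n a c (fun k => ∑ t ∈ s, x t * (k t : ℚ))
    = ((∑ i ∈ s, x i * (c i:ℚ)) * ch ((∑ i ∈ s, (a i:ℤ)) - ∑ i ∈ s, (c i:ℤ)) ((n:ℤ) - ∑ i ∈ s, (c i:ℤ))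
      + (∑ i ∈ s, x i * ((a i:ℚ) - (c i:ℚ)))
          * ch ((∑ i ∈ s, (a i:ℤ)) - (∑ i ∈ s, (c i:ℤ)) - 1) ((n:ℤ) - (∑ i ∈ s, (c i:ℤ)) - 1))
      * ∏ i ∈ s, ch (a i) (c i) := by
  have h1 : T s n a c (fun k => ∑ t ∈ s, x t * (k t : ℚ))
      = T s n a c (fun k => (∑ t ∈ s, x t * (k t : ℚ)) * 1) := by
    unfold T; exact Finset.sum_congr rfl fun k _ => by simp
  rw [h1, T_mul]
  have key : ∀ t ∈ s, x t * ((c t : ℚ) * T s n a c (fun _ => 1)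
        + ((c t : ℚ) + 1) * T s n a (Function.update c t (c t + 1)) (fun _ => 1))
      = (x t * (c t:ℚ)) * (ch ((∑ i ∈ s, (a i:ℤ)) - ∑ i ∈ s, (c i:ℤ)) ((n:ℤ) - ∑ i ∈ s, (c i:ℤ))
           * ∏ i ∈ s, ch (a i) (c i))
        + (x t * ((a t:ℚ) - (c t:ℚ))) * (ch ((∑ i ∈ s, (a i:ℤ)) - (∑ i ∈ s, (c i:ℤ)) - 1) ((n:ℤ) - (∑ i ∈ s, (c i:ℤ)) - 1)
           * ∏ i ∈ s, ch (a i) (c i)) := by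
    intro t ht
    rw [S0, S0]
    have hz : ∑ i ∈ s, ((Function.update c t (c t + 1) i : ℕ) : ℤ) = (∑ i ∈ s, (c i:ℤ)) + 1 := by
      rw [sum_update s ht (fun _ m => (m:ℤ)) c (c t + 1)]; push_cast; ring
    rw [hz]
    have e1 : (∑ i ∈ s, (a i:ℤ)) - ((∑ i ∈ s, (c i:ℤ)) + 1) = (∑ i ∈ s, (a i:ℤ)) - (∑ i ∈ s, (c i:ℤ)) - 1 := by ring
    have e2 : (n:ℤ) - ((∑ i ∈ s, (c i:ℤ)) + 1) = (n:ℤ) - (∑ i ∈ s, (c i:ℤ)) - 1 := by ring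
    rw [e1, e2]
    linear_combination (x t * ch ((∑ i ∈ s, (a i:ℤ)) - (∑ i ∈ s, (c i:ℤ)) - 1) ((n:ℤ) - (∑ i ∈ s, (c i:ℤ)) - 1))
      * prod_update_ch s ht a c
  rw [Finset.sum_congr rfl key, Finset.sum_add_distrib, ← Finset.sum_mul, ← Finset.sum_mul]
  have e3 : ∑ t ∈ s, x t * ((a t:ℚ) - (c t:ℚ)) = ∑ i ∈ s, x i * ((a i:ℚ) - (c i:ℚ)) := rfl
  ring

lemma S2 (s : Finset ι) (n : ℕ) (a c : ι → ℕ) (x : ι → ℚ) :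
    T s n a c (fun k => (∑ t ∈ s, x t * (k t : ℚ)) ^ 2)
    = ((∑ i ∈ s, x i * (c i:ℚ)) ^ 2
          * ch ((∑ i ∈ s, (a i:ℤ)) - ∑ i ∈ s, (c i:ℤ)) ((n:ℤ) - ∑ i ∈ s, (c i:ℤ))
      + (2 * (∑ i ∈ s, x i * ((a i:ℚ) - (c i:ℚ))) * (∑ i ∈ s, x i * (c i:ℚ))
          + (∑ i ∈ s, x i ^ 2 * ((a i:ℚ) - (c i:ℚ))))
          * ch ((∑ i ∈ s, (a i:ℤ)) - (∑ i ∈ s, (c i:ℤ)) - 1) ((n:ℤ) - (∑ i ∈ s, (c i:ℤ)) - 1)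
      + ((∑ i ∈ s, x i * ((a i:ℚ) - (c i:ℚ))) ^ 2 - (∑ i ∈ s, x i ^ 2 * ((a i:ℚ) - (c i:ℚ))))
          * ch ((∑ i ∈ s, (a i:ℤ)) - (∑ i ∈ s, (c i:ℤ)) - 2) ((n:ℤ) - (∑ i ∈ s, (c i:ℤ)) - 2))
      * ∏ i ∈ s, ch (a i) (c i) := by
  have h1 : T s n a c (fun k => (∑ t ∈ s, x t * (k t : ℚ)) ^ 2)
      = T s n a c (fun k => (∑ t ∈ s, x t * (k t : ℚ)) * (∑ t ∈ s, x t * (k t : ℚ))) := by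
    unfold T; exact Finset.sum_congr rfl fun k _ => by simp [sq]
  rw [h1, T_mul]
  have key : ∀ t ∈ s, x t * ((c t : ℚ) * T s n a c (fun k => ∑ t ∈ s, x t * (k t : ℚ))
        + ((c t : ℚ) + 1) * T s n a (Function.update c t (c t + 1)) (fun k => ∑ t ∈ s, x t * (k t : ℚ)))
      = (x t * (c t:ℚ)) *
          (((∑ i ∈ s, x i * (c i:ℚ)) * ch ((∑ i ∈ s, (a i:ℤ)) - ∑ i ∈ s, (c i:ℤ)) ((n:ℤ) - ∑ i ∈ s, (c i:ℤ))
            + (∑ i ∈ s, x i * ((a i:ℚ) - (c i:ℚ)))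
              * ch ((∑ i ∈ s, (a i:ℤ)) - (∑ i ∈ s, (c i:ℤ)) - 1) ((n:ℤ) - (∑ i ∈ s, (c i:ℤ)) - 1)) * ∏ i ∈ s, ch (a i) (c i))
        + (x t * ((a t:ℚ) - (c t:ℚ))) *
          (((∑ i ∈ s, x i * (c i:ℚ)) * ch ((∑ i ∈ s, (a i:ℤ)) - (∑ i ∈ s, (c i:ℤ)) - 1) ((n:ℤ) - (∑ i ∈ s, (c i:ℤ)) - 1)
            + (∑ i ∈ s, x i * ((a i:ℚ) - (c i:ℚ)))
              * ch ((∑ i ∈ s, (a i:ℤ)) - (∑ i ∈ s, (c i:ℤ)) - 2) ((n:ℤ) - (∑ i ∈ s, (c i:ℤ)) - 2)) * ∏ i ∈ s, ch (a i) (c i))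
        + (x t ^ 2 * ((a t:ℚ) - (c t:ℚ))) *
          ((ch ((∑ i ∈ s, (a i:ℤ)) - (∑ i ∈ s, (c i:ℤ)) - 1) ((n:ℤ) - (∑ i ∈ s, (c i:ℤ)) - 1)
            - ch ((∑ i ∈ s, (a i:ℤ)) - (∑ i ∈ s, (c i:ℤ)) - 2) ((n:ℤ) - (∑ i ∈ s, (c i:ℤ)) - 2)) * ∏ i ∈ s, ch (a i) (c i)) := by
    intro t ht
    rw [S1, S1]
    have hz : ∑ i ∈ s, ((Function.update c t (c t + 1) i : ℕ) : ℤ) = (∑ i ∈ s, (c i:ℤ)) + 1 := by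
      rw [sum_update s ht (fun _ m => (m:ℤ)) c (c t + 1)]; push_cast; ring
    have hu2 : ∑ i ∈ s, x i * ((Function.update c t (c t + 1) i : ℕ):ℚ)
        = (∑ i ∈ s, x i * (c i:ℚ)) + x t := by
      rw [sum_update s ht (fun i m => x i * (m:ℚ)) c (c t + 1)]; push_cast; ring
    have hu3 : ∑ i ∈ s, x i * ((a i:ℚ) - ((Function.update c t (c t + 1) i : ℕ):ℚ))
        = (∑ i ∈ s, x i * ((a i:ℚ) - (c i:ℚ))) - x t := by
      rw [sum_update s ht (fun i m => x i * ((a i:ℚ) - (m:ℚ))) c (c t + 1)]; push_cast; ring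
    rw [hz, hu2, hu3]
    have e1 : (∑ i ∈ s, (a i:ℤ)) - ((∑ i ∈ s, (c i:ℤ)) + 1) = (∑ i ∈ s, (a i:ℤ)) - (∑ i ∈ s, (c i:ℤ)) - 1 := by ring
    have e2 : (n:ℤ) - ((∑ i ∈ s, (c i:ℤ)) + 1) = (n:ℤ) - (∑ i ∈ s, (c i:ℤ)) - 1 := by ring
    have e3 : (∑ i ∈ s, (a i:ℤ)) - (∑ i ∈ s, (c i:ℤ)) - 1 - 1 = (∑ i ∈ s, (a i:ℤ)) - (∑ i ∈ s, (c i:ℤ)) - 2 := by ring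
    have e4 : (n:ℤ) - (∑ i ∈ s, (c i:ℤ)) - 1 - 1 = (n:ℤ) - (∑ i ∈ s, (c i:ℤ)) - 2 := by ring
    rw [e1, e2, e3, e4]
    linear_combination (x t * (((∑ i ∈ s, x i * (c i:ℚ)) + x t)
        * ch ((∑ i ∈ s, (a i:ℤ)) - (∑ i ∈ s, (c i:ℤ)) - 1) ((n:ℤ) - (∑ i ∈ s, (c i:ℤ)) - 1)
      + ((∑ i ∈ s, x i * ((a i:ℚ) - (c i:ℚ))) - x t)
        * ch ((∑ i ∈ s, (a i:ℤ)) - (∑ i ∈ s, (c i:ℤ)) - 2) ((n:ℤ) - (∑ i ∈ s, (c i:ℤ)) - 2)))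
      * prod_update_ch s ht a c
  rw [Finset.sum_congr rfl key, Finset.sum_add_distrib, Finset.sum_add_distrib,
      ← Finset.sum_mul, ← Finset.sum_mul, ← Finset.sum_mul]
  ring


lemma S3 (s : Finset ι) (n : ℕ) (a c : ι → ℕ) (x : ι → ℚ) :
    T s n a c (fun k => (∑ t ∈ s, x t * (k t : ℚ)) ^ 3)
    = ((∑ i ∈ s, x i * (c i:ℚ)) ^ 3 * ch ((∑ i ∈ s, (a i:ℤ)) - ∑ i ∈ s, (c i:ℤ)) ((n:ℤ) - ∑ i ∈ s, (c i:ℤ)) + (3 * (∑ i ∈ s, x i * ((a i:ℚ) - (c i:ℚ))) * (∑ i ∈ s, x i * (c i:ℚ)) ^ 2 + 3 * (∑ i ∈ s, x i ^ 2 * ((a i:ℚ) - (c i:ℚ))) * (∑ i ∈ s, x i * (c i:ℚ)) + (∑ i ∈ s, x i ^ 3 * ((a i:ℚ) - (c i:ℚ)))) * ch ((∑ i ∈ s, (a i:ℤ)) - (∑ i ∈ s, (c i:ℤ)) - 1) ((n:ℤ) - (∑ i ∈ s, (c i:ℤ)) - 1) + (3 * (∑ i ∈ s, x i * ((a i:ℚ)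 - (c i:ℚ))) ^ 2 * (∑ i ∈ s, x i * (c i:ℚ)) - 3 * (∑ i ∈ s, x i ^ 2 * ((a i:ℚ) - (c i:ℚ))) * (∑ i ∈ s, x i * (c i:ℚ)) + 3 * (∑ i ∈ s, x i * ((a i:ℚ) - (c i:ℚ))) * (∑ i ∈ s, x i ^ 2 * ((a i:ℚ) - (c i:ℚ))) - 3 * (∑ i ∈ s, x i ^ 3 * ((a i:ℚ) - (c i:ℚ)))) * ch ((∑ i ∈ s, (a i:ℤ)) - (∑ i ∈ s, (c i:ℤ)) - 2) ((n:ℤ) - (∑ i ∈ s, (c i:ℤ)) - 2) + ((∑ i ∈ s, x i * ((a i:ℚ) - (c i:ℚ))) ^ 3 - 3 * (∑ i ∈ s, x i * ((a i:ℚ) - (c i:ℚ))) * (∑ i ∈ s, x i ^ 2 * ((a i:ℚ) - (c i:ℚ))) + 2 * (∑ i ∈ s, x i ^ 3 * ((a i:ℚ) - (c i:ℚ)))) * ch ((∑ i ∈ s, (a i:ℤ)) - (∑ i ∈ s, (c i:ℤ)) - 3) ((n:ℤ) - (∑ i ∈ s, (c i:ℤ)) - 3)) * (∏ i ∈ s,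 ch (a i) (c i)) := by
  have h1 : T s n a c (fun k => (∑ t ∈ s, x t * (k t : ℚ)) ^ 3)
      = T s n a c (fun k => (∑ t ∈ s, x t * (k t : ℚ)) * (∑ t ∈ s, x t * (k t : ℚ)) ^ 2) := by
    unfold T; exact Finset.sum_congr rfl fun k _ => by simp only []; ring
  rw [h1, T_mul]
  have key : ∀ t ∈ s, x t * ((c t : ℚ) * T s n a c (fun k => (∑ t ∈ s, x t * (k t : ℚ)) ^ 2)
        + ((c t : ℚ) + 1) * T s n a (Function.update c t (c t + 1)) (fun k => (∑ t ∈ s, x t * (k t : ℚ)) ^ 2))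
      = (x t * (c t:ℚ)) * (((∑ i ∈ s, x i * (c i:ℚ)) ^ 2 * ch ((∑ i ∈ s, (a i:ℤ)) - ∑ i ∈ s, (c i:ℤ)) ((n:ℤ) - ∑ i ∈ s, (c i:ℤ)) + (2 * (∑ i ∈ s, x i * ((a i:ℚ) - (c i:ℚ))) * (∑ i ∈ s, x i * (c i:ℚ)) + (∑ i ∈ s, x i ^ 2 * ((a i:ℚ) - (c i:ℚ)))) * ch ((∑ i ∈ s, (a i:ℤ)) - (∑ i ∈ s, (c i:ℤ)) - 1) ((n:ℤ) - (∑ i ∈ s, (c i:ℤ)) - 1) + ((∑ i ∈ s, x i * ((a i:ℚ) - (c i:ℚ))) ^ 2 - (∑ i ∈ s, x i ^ 2 * ((a i:ℚ) - (c i:ℚ)))) * ch ((∑ i ∈ s, (a i:ℤ)) - (∑ i ∈ s, (c i:ℤ)) - 2) ((n:ℤ) - (∑ i ∈ s, (c i:ℤ)) - 2)) * (∏ i ∈ s, ch (a i) (c i)))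
        + (x t * ((a t:ℚ) - (c t:ℚ))) * (((∑ i ∈ s, x i * (c i:ℚ)) ^ 2 * ch ((∑ i ∈ s, (a i:ℤ)) - (∑ i ∈ s, (c i:ℤ)) - 1) ((n:ℤ) - (∑ i ∈ s, (c i:ℤ)) - 1) + (2 * (∑ i ∈ s, x i * ((a i:ℚ) - (c i:ℚ))) * (∑ i ∈ s, x i * (c i:ℚ)) + (∑ i ∈ s, x i ^ 2 * ((a i:ℚ) - (c i:ℚ)))) * ch ((∑ i ∈ s, (a i:ℤ)) - (∑ i ∈ s, (c i:ℤ)) - 2) ((n:ℤ) - (∑ i ∈ s, (c i:ℤ)) - 2) + ((∑ i ∈ s, x i * ((a i:ℚ) - (c i:ℚ))) ^ 2 - (∑ i ∈ s, x i ^ 2 * ((a i:ℚ) - (c i:ℚ)))) * ch ((∑ i ∈ s, (a i:ℤ)) - (∑ i ∈ s, (c i:ℤ)) - 3) ((n:ℤ) - (∑ i ∈ s, (c i:ℤ)) - 3)) * (∏ i ∈ s, ch (a i) (c i)))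
        + (x t ^ 2 * ((a t:ℚ) - (c t:ℚ))) * ((2 * (∑ i ∈ s, x i * (c i:ℚ)) * ch ((∑ i ∈ s, (a i:ℤ)) - (∑ i ∈ s, (c i:ℤ)) - 1) ((n:ℤ) - (∑ i ∈ s, (c i:ℤ)) - 1) + (2 * (∑ i ∈ s, x i * ((a i:ℚ) - (c i:ℚ))) - 2 * (∑ i ∈ s, x i * (c i:ℚ))) * ch ((∑ i ∈ s, (a i:ℤ)) - (∑ i ∈ s, (c i:ℤ)) - 2) ((n:ℤ) - (∑ i ∈ s, (c i:ℤ)) - 2) - 2 * (∑ i ∈ s, x i * ((a i:ℚ) - (c i:ℚ))) * ch ((∑ i ∈ s, (a i:ℤ)) - (∑ i ∈ s, (c i:ℤ)) - 3) ((n:ℤ) - (∑ i ∈ s, (c i:ℤ)) - 3)) * (∏ i ∈ s, ch (a i) (c i)))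
        + (x t ^ 3 * ((a t:ℚ) - (c t:ℚ))) * ((ch ((∑ i ∈ s, (a i:ℤ)) - (∑ i ∈ s, (c i:ℤ)) - 1) ((n:ℤ) - (∑ i ∈ s, (c i:ℤ)) - 1) - 3 * ch ((∑ i ∈ s, (a i:ℤ)) - (∑ i ∈ s, (c i:ℤ)) - 2) ((n:ℤ) - (∑ i ∈ s, (c i:ℤ)) - 2) + 2 * ch ((∑ i ∈ s, (a i:ℤ)) - (∑ i ∈ s, (c i:ℤ)) - 3) ((n:ℤ) - (∑ i ∈ s, (c i:ℤ)) - 3)) * (∏ i ∈ s, ch (a i) (c i))) := by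
    intro t ht
    rw [S2, S2]
    have hz : ∑ i ∈ s, ((Function.update c t (c t + 1) i : ℕ) : ℤ) = (∑ i ∈ s, (c i:ℤ)) + 1 := by
      rw [sum_update s ht (fun _ m => (m:ℤ)) c (c t + 1)]; push_cast; ring
    have hu2 : ∑ i ∈ s, x i * ((Function.update c t (c t + 1) i : ℕ):ℚ)
        = (∑ i ∈ s, x i * (c i:ℚ)) + x t := by
      rw [sum_update s ht (fun i m => x i * (m:ℚ)) c (c t + 1)]; push_cast; ring
    have hu3 : ∑ i ∈ s, x i * ((a i:ℚ) - ((Function.update c t (c t + 1) i : ℕ):ℚ))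
        = (∑ i ∈ s, x i * ((a i:ℚ) - (c i:ℚ))) - x t := by
      rw [sum_update s ht (fun i m => x i * ((a i:ℚ) - (m:ℚ))) c (c t + 1)]; push_cast; ring
    have hu4 : ∑ i ∈ s, x i ^ 2 * ((a i:ℚ) - ((Function.update c t (c t + 1) i : ℕ):ℚ))
        = (∑ i ∈ s, x i ^ 2 * ((a i:ℚ) - (c i:ℚ))) - x t ^ 2 := by
      rw [sum_update s ht (fun i m => x i ^ 2 * ((a i:ℚ) - (m:ℚ))) c (c t + 1)]; push_cast; ring
    rw [hz, hu2, hu3, hu4]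
    have e1 : (∑ i ∈ s, (a i:ℤ)) - ((∑ i ∈ s, (c i:ℤ)) + 1) = (∑ i ∈ s, (a i:ℤ)) - (∑ i ∈ s, (c i:ℤ)) - 1 := by ring
    have e2 : (n:ℤ) - ((∑ i ∈ s, (c i:ℤ)) + 1) = (n:ℤ) - (∑ i ∈ s, (c i:ℤ)) - 1 := by ring
    rw [e1, e2]
    have e3 : (∑ i ∈ s, (a i:ℤ)) - (∑ i ∈ s, (c i:ℤ)) - 1 - 1 = (∑ i ∈ s, (a i:ℤ)) - (∑ i ∈ s, (c i:ℤ)) - 2 := by ring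
    have e4 : (n:ℤ) - (∑ i ∈ s, (c i:ℤ)) - 1 - 1 = (n:ℤ) - (∑ i ∈ s, (c i:ℤ)) - 2 := by ring
    rw [e3, e4]
    have e5 : (∑ i ∈ s, (a i:ℤ)) - (∑ i ∈ s, (c i:ℤ)) - 1 - 2 = (∑ i ∈ s, (a i:ℤ)) - (∑ i ∈ s, (c i:ℤ)) - 3 := by ring
    have e6 : (n:ℤ) - (∑ i ∈ s, (c i:ℤ)) - 1 - 2 = (n:ℤ) - (∑ i ∈ s, (c i:ℤ)) - 3 := by ring
    rw [e5, e6]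
    linear_combination (x t * (((∑ i ∈ s, x i * (c i:ℚ)) + x t) ^ 2 * ch ((∑ i ∈ s, (a i:ℤ)) - (∑ i ∈ s, (c i:ℤ)) - 1) ((n:ℤ) - (∑ i ∈ s, (c i:ℤ)) - 1) + (2 * ((∑ i ∈ s, x i * ((a i:ℚ) - (c i:ℚ))) - x t) * ((∑ i ∈ s, x i * (c i:ℚ)) + x t) + ((∑ i ∈ s, x i ^ 2 * ((a i:ℚ) - (c i:ℚ))) - x t ^ 2)) * ch ((∑ i ∈ s, (a i:ℤ)) - (∑ i ∈ s, (c i:ℤ)) - 2) ((n:ℤ) - (∑ i ∈ s, (c i:ℤ)) - 2) + (((∑ i ∈ s, x i * ((a i:ℚ) - (c i:ℚ))) - x t) ^ 2 - ((∑ i ∈ s, x i ^ 2 * ((a i:ℚ) - (c i:ℚ))) - x t ^ 2)) * ch ((∑ i ∈ s, (a i:ℤ)) - (∑ i ∈ s, (c i:ℤ)) - 3) ((n:ℤ) - (∑ i ∈ s, (c i:ℤ)) - 3))) * prod_update_ch s ht a c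
  rw [Finset.sum_congr rfl key, Finset.sum_add_distrib, Finset.sum_add_distrib, Finset.sum_add_distrib,
      ← Finset.sum_mul, ← Finset.sum_mul, ← Finset.sum_mul, ← Finset.sum_mul]
  ring

end Helpers

theorem stmt7 (m n : ℕ) (hm : 1 ≤ m) (a c : Fin m → ℕ) (x : Fin m → ℚ) :
    (∑ k ∈ Finset.Nat.antidiagonalTuple m n, (∏ i, ch (a i) (k i) * ch (k i) (c i)) * (∑ i, x i * (k i : ℚ)) ^ 3)
        * (((∑ i, (a i : ℚ)) - (∑ i, (c i : ℚ))) * ((∑ i, (a i : ℚ)) - (∑ i, (c i : ℚ)) - 1) * ((∑ i, (a i : ℚ)) - (∑ i, (c i : ℚ)) - 2))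
      = ch ((∑ i, (a i : ℤ)) - ∑ i, (c i : ℤ)) ((n : ℤ) - ∑ i, (c i : ℤ)) * (∏ i, ch (a i) (c i))
        * (((n : ℚ) - (∑ i, (c i : ℚ))) * ((n : ℚ) - (∑ i, (c i : ℚ)) - 1) * (((n : ℚ) - (∑ i, (c i : ℚ)) - 2) * (∑ i, x i * (a i : ℚ)) ^ 3
              + ((∑ i, (a i : ℚ)) - (n : ℚ)) * ((∑ i, x i ^ 3 * (c i : ℚ)) - (∑ i, x i ^ 3 * (a i : ℚ)) + 3 * (∑ i, x i * (a i : ℚ)) * ((∑ i, x i ^ 2 * (a i : ℚ)) - (∑ i, x i ^ 2 * (c i : ℚ)) + (∑ i, x i * (a i : ℚ)) * (∑ i, x i * (c i : ℚ)))))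
           + ((∑ i, (a i : ℚ)) - (n : ℚ)) * ((∑ i, (a i : ℚ)) - (n : ℚ) - 1) * (((∑ i, (a i : ℚ)) - (n : ℚ) - 2) * (∑ i, x i * (c i : ℚ)) ^ 3
              + ((n : ℚ) - (∑ i, (c i : ℚ))) * ((∑ i, x i ^ 3 * (a i : ℚ)) - (∑ i, x i ^ 3 * (c i : ℚ)) + 3 * (∑ i, x i * (c i : ℚ)) * ((∑ i, x i ^ 2 * (a i : ℚ)) - (∑ i, x i ^ 2 * (c i : ℚ)) + (∑ i, x i * (a i : ℚ)) * (∑ i, x i * (c i : ℚ)))))) := by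
  rw [← Finset.piAntidiag_univ_fin_eq_antidiagonalTuple]
  have hL : (∑ k ∈ (univ : Finset (Fin m)).piAntidiag n,
        (∏ i, ch (a i) (k i) * ch (k i) (c i)) * (∑ i, x i * (k i : ℚ)) ^ 3)
      = T univ n a c (fun k => (∑ t, x t * (k t : ℚ)) ^ 3) := rfl
  rw [hL, S3 univ n a c x]
  have hA1 : (∑ i, x i * (a i:ℚ)) = (∑ i, x i * ((a i:ℚ) - (c i:ℚ))) + (∑ i, x i * (c i : ℚ)) := by
    rw [← Finset.sum_add_distrib]; exact Finset.sum_congr rfl fun i _ => by ring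
  have hA2 : (∑ i, x i ^ 2 * (a i:ℚ)) = (∑ i, x i ^ 2 * ((a i:ℚ) - (c i:ℚ))) + (∑ i, x i ^ 2 * (c i : ℚ)) := by
    rw [← Finset.sum_add_distrib]; exact Finset.sum_congr rfl fun i _ => by ring
  have hA3 : (∑ i, x i ^ 3 * (a i:ℚ)) = (∑ i, x i ^ 3 * ((a i:ℚ) - (c i:ℚ))) + (∑ i, x i ^ 3 * (c i : ℚ)) := by
    rw [← Finset.sum_add_distrib]; exact Finset.sum_congr rfl fun i _ => by ring
  rw [hA1, hA2, hA3]
  have R1 := ch_ratio ((∑ i, (a i:ℤ)) - (∑ i, (c i:ℤ))) ((n:ℤ) - (∑ i, (c i:ℤ)))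
  have R2 := ch_ratio ((∑ i, (a i:ℤ)) - (∑ i, (c i:ℤ)) - 1) ((n:ℤ) - (∑ i, (c i:ℤ)) - 1)
  have R3 := ch_ratio ((∑ i, (a i:ℤ)) - (∑ i, (c i:ℤ)) - 2) ((n:ℤ) - (∑ i, (c i:ℤ)) - 2)
  have eb2 : (∑ i, (a i:ℤ)) - (∑ i, (c i:ℤ)) - 1 - 1 = (∑ i, (a i:ℤ)) - (∑ i, (c i:ℤ)) - 2 := by ring
  have eM2 : (n:ℤ) - (∑ i, (c i:ℤ)) - 1 - 1 = (n:ℤ) - (∑ i, (c i:ℤ)) - 2 := by ring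
  have eb3 : (∑ i, (a i:ℤ)) - (∑ i, (c i:ℤ)) - 2 - 1 = (∑ i, (a i:ℤ)) - (∑ i, (c i:ℤ)) - 3 := by ring
  have eM3 : (n:ℤ) - (∑ i, (c i:ℤ)) - 2 - 1 = (n:ℤ) - (∑ i, (c i:ℤ)) - 3 := by ring
  rw [eb2, eM2] at R2
  rw [eb3, eM3] at R3
  push_cast at R1 R2 R3
  linear_combination ((∏ i, ch (a i) (c i)) * ((3 * (∑ i, x i * ((a i:ℚ) - (c i:ℚ))) * (∑ i, x i * (c i : ℚ)) ^ 2 + 3 * (∑ i, x i ^ 2 * ((a i:ℚ) - (c i:ℚ))) * (∑ i, x i * (c i : ℚ)) + (∑ i, x i ^ 3 * ((a i:ℚ) - (c i:ℚ)))) * (((∑ i, (a i : ℚ)) - (∑ i, (c i : ℚ))) - 1) * (((∑ i, (a i : ℚ)) - (∑ i, (c i : ℚ))) - 2) + (3 * (∑ i, x i * ((a i:ℚ) - (c i:ℚ))) ^ 2 * (∑ i, x i * (c i : ℚ)) - 3 * (∑ i, x i ^ 2 * ((a i:ℚ) - (c i:ℚ))) * (∑ i, x i * (c i : ℚ)) +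 3 * (∑ i, x i * ((a i:ℚ) - (c i:ℚ))) * (∑ i, x i ^ 2 * ((a i:ℚ) - (c i:ℚ))) - 3 * (∑ i, x i ^ 3 * ((a i:ℚ) - (c i:ℚ)))) * (((∑ i, (a i : ℚ)) - (∑ i, (c i : ℚ))) - 2) * (((n : ℚ) - (∑ i, (c i : ℚ))) - 1) + ((∑ i, x i * ((a i:ℚ) - (c i:ℚ))) ^ 3 - 3 * (∑ i, x i * ((a i:ℚ) - (c i:ℚ))) * (∑ i, x i ^ 2 * ((a i:ℚ) - (c i:ℚ))) + 2 * (∑ i, x i ^ 3 * ((a i:ℚ) - (c i:ℚ)))) * (((n : ℚ) - (∑ i, (c i : ℚ))) - 1) * (((n : ℚ) - (∑ i, (c i : ℚ))) - 2))) * R1 + ((∏ i, ch (a i) (c i)) * ((∑ i, (a i : ℚ)) - (∑ i, (c i : ℚ))) * ((3 * (∑ i, x i * ((a i:ℚ) - (c i:ℚ))) ^ 2 * (∑ i, x i * (c i : ℚ)) - 3 * (∑ i, x i ^ 2 * ((a i:ℚ) - (c i:ℚ))) * (∑ i, x i * (c i : ℚ)) + 3 * (∑ i, x i * ((a i:ℚ)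 - (c i:ℚ))) * (∑ i, x i ^ 2 * ((a i:ℚ) - (c i:ℚ))) - 3 * (∑ i, x i ^ 3 * ((a i:ℚ) - (c i:ℚ)))) * (((∑ i, (a i : ℚ)) - (∑ i, (c i : ℚ))) - 2) + ((∑ i, x i * ((a i:ℚ) - (c i:ℚ))) ^ 3 - 3 * (∑ i, x i * ((a i:ℚ) - (c i:ℚ))) * (∑ i, x i ^ 2 * ((a i:ℚ) - (c i:ℚ))) + 2 * (∑ i, x i ^ 3 * ((a i:ℚ) - (c i:ℚ)))) * (((n : ℚ) - (∑ i, (c i : ℚ))) - 2))) * R2 + ((∏ i, ch (a i) (c i)) * ((∑ i, (a i : ℚ)) - (∑ i, (c i : ℚ))) * (((∑ i, (a i : ℚ)) - (∑ i, (c i : ℚ))) - 1) * ((∑ i, x i * ((a i:ℚ) - (c i:ℚ))) ^ 3 - 3 * (∑ i, x i * ((a i:ℚ) - (c i:ℚ))) * (∑ i, x i ^ 2 * ((a i:ℚ) - (c i:ℚ))) + 2 * (∑ i, x i ^ 3 * ((a i:ℚ) - (c i:ℚ))))) * R3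
end

section
/- For integers m ≥ 1, n ≥ 0, sequences of nonnegative integers a_i and c_i, and rationals x_i, the sum over all tuples (k_1,...,k_m) with ∑ k_i = n of [∏ C(a_i,k_i)C(k_i,c_i)] * (∑ x_i k_i^3), multiplied by (A_0-C_0)(A_0-C_0-1)(A_0-C_0-2), equals C(A_0-C_0, n-C_0) * [∏ C(a_i,c_i)] * { (n-C_0)(n-C_0-1)[(n-C_0-2)A_{1,3} + (A_0-n)(C_1 - A_1 + 3(S_{2,1} + A_{1,2} - S_{1,1}))] + (A_0-n)(A_0-n-1)[(A_0-n-2)C_{1,3} + (n-C_0)(A_1 - C_1 + 3(S_{1,2} - C_{1,2} + S_{1,1}))] }. -/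
open Finset

lemma ch_natCast (p q : ℕ) : ch p q = (p.choose q : ℚ) := by
  unfold ch
  split_ifs with h
  · simp
  · push_neg at h
    have : p < q := by exact_mod_cast h (by positivity)
    simp [Nat.choose_eq_zero_of_lt this]

lemma ch_of_neg {B J : ℤ} (h : J < 0) : ch B J = 0 := by
  unfold ch; rw [if_neg]; omega

lemma ch_of_lt {B J : ℤ} (h : B < J) : ch B J = 0 := by
  unfold ch; rw [if_neg]; omega

lemma stepL (B J : ℤ) : ch B J * (J : ℚ) = (B : ℚ) * ch (B - 1) (J - 1) := by
  rcases lt_trichotomy J 0 with hJ | hJ | hJ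
  · rw [ch_of_neg hJ, ch_of_neg (by omega)]; ring
  · subst hJ; rw [ch_of_neg (by norm_num : (0:ℤ) - 1 < 0)]; push_cast; ring
  · rcases le_or_gt J B with hJB | hJB
    · -- 1 ≤ J ≤ B
      have hB : 0 < B := lt_of_lt_of_le hJ hJB
      obtain ⟨β, rfl⟩ : ∃ β : ℕ, B = (β : ℤ) + 1 := ⟨(B - 1).toNat, by omega⟩
      obtain ⟨κ, rfl⟩ : ∃ κ : ℕ, J = (κ : ℤ) + 1 := ⟨(J - 1).toNat, by omega⟩
      unfold ch
      rw [if_pos (by omega), if_pos (by constructor <;> omega)]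
      have h1 : ((β : ℤ) + 1).toNat = β + 1 := by omega
      have h2 : ((κ : ℤ) + 1).toNat = κ + 1 := by omega
      have h3 : ((β : ℤ) + 1 - 1).toNat = β := by omega
      have h4 : ((κ : ℤ) + 1 - 1).toNat = κ := by omega
      rw [h1, h2, h3, h4]
      have := Nat.add_one_mul_choose_eq β κ
      have : (β + 1) * β.choose κ = (β+1).choose (κ+1) * (κ+1) := this
      push_cast
      have := congrArg (fun z : ℕ => (z : ℚ)) this
      push_cast at this
      linarith [this]
    · rw [ch_of_lt hJB, ch_of_lt (by omega)]; ring

lemma chFF (B J : ℤ) (p : ℕ) :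
    ch B J * ∏ l ∈ Finset.range p, ((J : ℚ) - l) =
      (∏ l ∈ Finset.range p, ((B : ℚ) - l)) * ch (B - p) (J - p) := by
  induction p with
  | zero => simp
  | succ p ih =>
    rw [Finset.prod_range_succ, Finset.prod_range_succ, ← mul_assoc, ih]
    have : ((J : ℚ) - p) = (((J - p : ℤ) : ℚ)) := by push_cast; ring
    rw [mul_assoc, this, stepL (B - p) (J - p)]
    have e1 : B - ((p:ℤ) + 1) = B - p - 1 := by ring
    have e2 : J - ((p:ℤ) + 1) = J - p - 1 := by ring
    rw [show ((p+1 : ℕ) : ℤ) = (p:ℤ)+1 by push_cast; ring, e1, e2]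
    push_cast
    ring

lemma V2c (q1 q2 p1 p2 n : ℕ) :
    ∑ uv ∈ Finset.HasAntidiagonal.antidiagonal n, ch q1 ((uv.1 : ℤ) - p1) * ch q2 ((uv.2 : ℤ) - p2)
      = ch (q1 + q2) ((n : ℤ) - p1 - p2) := by
  rw [Finset.Nat.sum_antidiagonal_eq_sum_range_succ_mk]
  dsimp only
  rcases lt_or_ge n (p1 + p2) with hn | hn
  · rw [ch_of_neg (show (n : ℤ) - p1 - p2 < 0 by omega)]
    apply Finset.sum_eq_zero
    intro u hu
    rw [Finset.mem_range] at hu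
    rcases lt_or_ge u p1 with h | h
    · rw [ch_of_neg (show (u : ℤ) - p1 < 0 by omega)]; ring
    · rw [ch_of_neg (show ((n - u : ℕ) : ℤ) - p2 < 0 by omega)]; ring
  · -- p1 + p2 ≤ n
    have hp1 : p1 ≤ n + 1 := by omega
    rw [Finset.range_eq_Ico, ← Finset.sum_Ico_consecutive _ (Nat.zero_le p1) hp1]
    have hz : ∑ u ∈ Finset.Ico 0 p1, ch q1 ((u : ℤ) - p1) * ch q2 (((n - u : ℕ) : ℤ) - p2) = 0 := by
      apply Finset.sum_eq_zero
      intro u hu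
      rw [Finset.mem_Ico] at hu
      rw [ch_of_neg (show (u : ℤ) - p1 < 0 by omega)]; ring
    rw [hz, zero_add, Finset.sum_Ico_eq_sum_range]
    set M := n - p1 with hM
    have hr : n + 1 - p1 = M + 1 := by omega
    rw [hr]
    have step1 : ∀ w ∈ Finset.range (M + 1),
        ch q1 (((p1 + w : ℕ) : ℤ) - p1) * ch q2 (((n - (p1 + w) : ℕ) : ℤ) - p2)
          = (q1.choose w : ℚ) * ch q2 ((M : ℤ) - w - p2) := by
      intro w hw
      rw [Finset.mem_range] at hw
      have e1 : ((p1 + w : ℕ) : ℤ) - p1 = (w : ℤ) := by push_cast; ring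
      have e2 : ((n - (p1 + w) : ℕ) : ℤ) - p2 = (M : ℤ) - w - p2 := by omega
      rw [e1, e2, ch_natCast]
    rw [Finset.sum_congr rfl step1]
    have hgoal : ((n : ℤ) - p1 - p2) = ((M : ℤ) - p2) := by omega
    rw [hgoal]
    have hp2 : p2 ≤ M := by omega
    have hsplit : M - p2 + 1 ≤ M + 1 := by omega
    rw [Finset.range_eq_Ico, ← Finset.sum_Ico_consecutive _ (Nat.zero_le (M - p2 + 1)) hsplit]
    have hz2 : ∑ w ∈ Finset.Ico (M - p2 + 1) (M + 1), (q1.choose w : ℚ) * ch q2 ((M : ℤ) - w - p2) = 0 := by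
      apply Finset.sum_eq_zero
      intro w hw
      rw [Finset.mem_Ico] at hw
      rw [ch_of_neg (show (M : ℤ) - w - p2 < 0 by omega)]; ring
    rw [hz2, add_zero]
    have step2 : ∀ w ∈ Finset.Ico 0 (M - p2 + 1),
        (q1.choose w : ℚ) * ch q2 ((M : ℤ) - w - p2)
          = (q1.choose w : ℚ) * (q2.choose (M - p2 - w) : ℚ) := by
      intro w hw
      rw [Finset.mem_Ico] at hw
      have : ((M : ℤ) - w - p2) = ((M - p2 - w : ℕ) : ℤ) := by omega
      rw [this, ch_natCast]
    rw [Finset.sum_congr rfl step2]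
    have : ((M : ℤ) - p2) = ((M - p2 : ℕ) : ℤ) := by omega
    rw [this]
    have : ((q1 : ℤ) + q2) = ((q1 + q2 : ℕ) : ℤ) := by push_cast; ring
    rw [this, ch_natCast]
    rw [Nat.add_choose_eq, Finset.Nat.sum_antidiagonal_eq_sum_range_succ_mk]
    rw [← Finset.range_eq_Ico]
    push_cast
    rfl

variable {ι : Type*} [DecidableEq ι]

lemma lemVc (s : Finset ι) (b cc : ι → ℕ) :
    ∀ n : ℕ, ∑ k ∈ s.piAntidiag n, ∏ i ∈ s, ch (b i) ((k i : ℤ) - cc i)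
      = ch ((∑ i ∈ s, b i : ℕ) : ℤ) ((n : ℤ) - ((∑ i ∈ s, cc i : ℕ) : ℤ)) := by
  induction s using Finset.cons_induction with
  | empty =>
    intro n
    rcases Nat.eq_zero_or_pos n with rfl | hn
    · have h00 := ch_natCast 0 0
      simp only [Finset.sum_empty, Nat.choose_self, Nat.cast_one, Nat.cast_zero] at h00 ⊢
      simp [h00]
    · rw [Finset.piAntidiag_empty_of_ne_zero (by omega)]
      simp only [Finset.sum_empty, Nat.cast_zero, sub_zero]
      rw [ch_of_lt (by exact_mod_cast hn)]
  | cons t s ht ih =>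
    intro n
    rw [Finset.piAntidiag_cons, Finset.sum_disjiUnion]
    have step : ∀ uv ∈ Finset.HasAntidiagonal.antidiagonal n,
        (∑ k ∈ (s.piAntidiag uv.2).map
            (addRightEmbedding fun j => if j = t then uv.1 else 0),
          ∏ i ∈ Finset.cons t s ht, ch (b i) ((k i : ℤ) - cc i))
        = ch (b t) ((uv.1 : ℤ) - cc t) * ch ((∑ i ∈ s, b i : ℕ) : ℤ) ((uv.2 : ℤ) - ((∑ i ∈ s, cc i : ℕ) : ℤ)) := by
      intro uv huv
      rw [Finset.sum_map]
      have inner : ∀ f ∈ s.piAntidiag uv.2,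
          (∏ i ∈ Finset.cons t s ht,
            ch (b i) ((((addRightEmbedding fun j => if j = t then uv.1 else 0) f) i : ℤ) - cc i))
          = ch (b t) ((uv.1 : ℤ) - cc t) * ∏ i ∈ s, ch (b i) ((f i : ℤ) - cc i) := by
        intro f hf
        rw [Finset.mem_piAntidiag] at hf
        have hft : f t = 0 := by
          by_contra h
          exact ht (hf.2 t h)
        rw [Finset.prod_cons]
        congr 1
        · simp [addRightEmbedding, hft]
        · apply Finset.prod_congr rfl
          intro i hi
          have : i ≠ t := fun h => ht (h ▸ hi)
          simp [addRightEmbedding, this]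
      rw [Finset.sum_congr rfl inner, ← Finset.mul_sum, ih uv.2]
    rw [Finset.sum_congr rfl step, V2c (b t) (∑ i ∈ s, b i) (cc t) (∑ i ∈ s, cc i) n]
    rw [Finset.sum_cons, Finset.sum_cons]
    congr 1 <;> (push_cast; ring)

lemma lemGc {s : Finset ι} {t : ι} (ht : t ∉ s) (q p : ℕ) (b cc : ι → ℕ) (n : ℕ) :
    ∑ k ∈ (Finset.cons t s ht).piAntidiag n, ch q ((k t : ℤ) - p) * ∏ i ∈ s, ch (b i) ((k i : ℤ) - cc i)
      = ch (((q + ∑ i ∈ s, b i : ℕ)) : ℤ) ((n : ℤ) - p - ((∑ i ∈ s, cc i : ℕ) : ℤ)) := by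
  rw [Finset.piAntidiag_cons, Finset.sum_disjiUnion]
  have step : ∀ uv ∈ Finset.HasAntidiagonal.antidiagonal n,
      (∑ k ∈ (s.piAntidiag uv.2).map
          (addRightEmbedding fun j => if j = t then uv.1 else 0),
        ch q ((k t : ℤ) - p) * ∏ i ∈ s, ch (b i) ((k i : ℤ) - cc i))
      = ch q ((uv.1 : ℤ) - p) * ch ((∑ i ∈ s, b i : ℕ) : ℤ) ((uv.2 : ℤ) - ((∑ i ∈ s, cc i : ℕ) : ℤ)) := by
    intro uv huv
    rw [Finset.sum_map]
    have inner : ∀ f ∈ s.piAntidiag uv.2,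
        ch q ((((addRightEmbedding fun j => if j = t then uv.1 else 0) f) t : ℤ) - p) *
          ∏ i ∈ s, ch (b i) ((((addRightEmbedding fun j => if j = t then uv.1 else 0) f) i : ℤ) - cc i)
        = ch q ((uv.1 : ℤ) - p) * ∏ i ∈ s, ch (b i) ((f i : ℤ) - cc i) := by
      intro f hf
      rw [Finset.mem_piAntidiag] at hf
      have hft : f t = 0 := by
        by_contra h
        exact ht (hf.2 t h)
      congr 1
      · simp [addRightEmbedding, hft]
      · apply Finset.prod_congr rfl
        intro i hi
        have : i ≠ t := fun h => ht (h ▸ hi)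
        simp [addRightEmbedding, this]
    rw [Finset.sum_congr rfl inner, ← Finset.mul_sum, lemVc s b cc uv.2]
  rw [Finset.sum_congr rfl step, V2c q (∑ i ∈ s, b i) p (∑ i ∈ s, cc i) n]
  congr 1 <;> (push_cast; ring)

lemma ch_split_s8 (A C K : ℕ) (h : C ≤ A) :
    ch A K * ch K C = ch A C * ch (((A - C : ℕ)) : ℤ) ((K : ℤ) - C) := by
  rcases lt_or_ge K C with hKC | hKC
  · rw [ch_of_lt (show (K : ℤ) < C by exact_mod_cast hKC),
      ch_of_neg (show (K : ℤ) - C < 0 by omega)]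
    ring
  · rcases lt_or_ge A K with hAK | hAK
    · rw [ch_of_lt (show (A : ℤ) < K by exact_mod_cast hAK),
        ch_of_lt (show ((A - C : ℕ) : ℤ) < (K : ℤ) - C by omega)]
      ring
    · rw [ch_natCast A K, ch_natCast K C, ch_natCast A C,
        show (K : ℤ) - C = ((K - C : ℕ) : ℤ) by omega, ch_natCast]
      rw [← Nat.cast_mul, ← Nat.cast_mul, Nat.choose_mul hKC]

lemma rel1 (B M : ℤ) : ch (B - 1) (M - 1) * (B : ℚ) = ch B M * (M : ℚ) := by
  linear_combination - stepL B M

lemma rel2 (B M : ℤ) : ch (B - 2) (M - 2) * ((B : ℚ) * ((B : ℚ) - 1)) = ch B M * ((M : ℚ) * ((M : ℚ) - 1)) := by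
  have h1 := rel1 B M
  have h2 := rel1 (B - 1) (M - 1)
  rw [show B - 1 - 1 = B - 2 from by ring, show M - 1 - 1 = M - 2 from by ring] at h2
  push_cast at h1 h2
  linear_combination ((M : ℚ) - 1) * h1 + (B : ℚ) * h2

lemma rel3 (B M : ℤ) : ch (B - 3) (M - 3) * ((B : ℚ) * ((B : ℚ) - 1) * ((B : ℚ) - 2)) = ch B M * ((M : ℚ) * ((M : ℚ) - 1) * ((M : ℚ) - 2)) := by
  have h1 := rel2 B M
  have h2 := rel1 (B - 2) (M - 2)
  rw [show B - 2 - 1 = B - 3 from by ring, show M - 2 - 1 = M - 3 from by ring] at h2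
  push_cast at h1 h2
  linear_combination ((M : ℚ) - 2) * h1 + ((B : ℚ) * ((B : ℚ) - 1)) * h2

lemma lemM {m : ℕ} (t : Fin m) (b cc : Fin m → ℕ) (p n : ℕ) :
    ∑ k ∈ Finset.Nat.antidiagonalTuple m n,
        (∏ i, ch (b i) ((k i : ℤ) - cc i)) * ∏ l ∈ Finset.range p, ((k t : ℚ) - cc t - l)
      = (∏ l ∈ Finset.range p, ((b t : ℚ) - l)) *
          ch (((∑ i, b i : ℕ) : ℤ) - p) ((n : ℤ) - ((∑ i, cc i : ℕ) : ℤ) - p) := by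
  rw [← Finset.piAntidiag_univ_fin_eq_antidiagonalTuple]
  rcases lt_or_ge (b t) p with hbp | hbp
  · -- b t < p : both sides vanish
    rw [Finset.prod_eq_zero (Finset.mem_range.mpr hbp) (sub_self ((b t : ℚ))), zero_mul]
    apply Finset.sum_eq_zero
    intro k hk
    by_cases h1 : (k t : ℤ) - cc t < 0
    · rw [Finset.prod_eq_zero (Finset.mem_univ t) (ch_of_neg h1), zero_mul]
    · by_cases h2 : ((b t : ℕ) : ℤ) < (k t : ℤ) - cc t
      · rw [Finset.prod_eq_zero (Finset.mem_univ t) (ch_of_lt h2), zero_mul]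
      · have hd1 : cc t ≤ k t := by omega
        have hd2 : k t - cc t < p := by omega
        rw [mul_eq_zero]; right
        refine Finset.prod_eq_zero (Finset.mem_range.mpr hd2) ?_
        rw [Nat.cast_sub hd1]; ring
  · -- p ≤ b t : main computation
    set s := (Finset.univ : Finset (Fin m)).erase t with hs
    have ht : t ∉ s := Finset.notMem_erase t _
    have huniv : Finset.cons t s ht = Finset.univ := by
      rw [Finset.cons_eq_insert, hs, Finset.insert_erase (Finset.mem_univ t)]
    simp only [← huniv]
    set q := b t - p with hq
    have hqz : ((q : ℕ) : ℤ) = ((b t : ℕ) : ℤ) - p := by omega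
    have pointwise : ∀ k ∈ (Finset.cons t s ht).piAntidiag n,
        (∏ i ∈ Finset.cons t s ht, ch (b i) ((k i : ℤ) - cc i)) *
            ∏ l ∈ Finset.range p, ((k t : ℚ) - cc t - l)
          = (∏ l ∈ Finset.range p, ((b t : ℚ) - l)) *
              (ch q ((k t : ℤ) - ((cc t + p : ℕ) : ℤ)) * ∏ i ∈ s, ch (b i) ((k i : ℤ) - cc i)) := by
      intro k hk
      rw [Finset.prod_cons]
      have hcast : ∀ l ∈ Finset.range p, ((k t : ℚ) - cc t - l)
          = ((((k t : ℤ) - cc t) : ℤ) : ℚ) - l := by intro l _; push_cast; ring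
      rw [mul_comm (ch (b t) ((k t : ℤ) - cc t)) (∏ i ∈ s, ch (b i) ((k i : ℤ) - cc i)),
        mul_assoc, Finset.prod_congr rfl hcast, chFF]
      have e1 : ((b t : ℤ) - p) = (q : ℤ) := by omega
      have e2 : ((k t : ℤ) - cc t - p) = (k t : ℤ) - ((cc t + p : ℕ) : ℤ) := by push_cast; ring
      rw [e1, e2]
      have e3 : ∀ l ∈ Finset.range p, ((((b t : ℕ) : ℤ) : ℚ) - l) = ((b t : ℚ) - l) := by
        intro l _; push_cast; ring
      rw [Finset.prod_congr rfl e3]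
      ring
    rw [Finset.sum_congr rfl pointwise, ← Finset.mul_sum]
    rw [lemGc ht q (cc t + p) b cc n]
    have e1 : ((q + ∑ i ∈ s, b i : ℕ) : ℤ) = ((∑ x ∈ Finset.cons t s ht, b x : ℕ) : ℤ) - p := by
      rw [Finset.sum_cons]; push_cast; omega
    have e2 : (n : ℤ) - ((cc t + p : ℕ) : ℤ) - ((∑ i ∈ s, cc i : ℕ) : ℤ)
        = (n : ℤ) - ((∑ x ∈ Finset.cons t s ht, cc x : ℕ) : ℤ) - p := by
      rw [Finset.sum_cons]; push_cast; ring
    rw [e1, e2]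

lemma main_aux (m n : ℕ) (b c : Fin m → ℕ) (x : Fin m → ℚ) :
    (∑ k ∈ Finset.Nat.antidiagonalTuple m n,
        (∏ i, ch (b i) ((k i : ℤ) - c i)) * (∑ i, x i * (k i : ℚ) ^ 3))
      * (((∑ i, b i : ℕ) : ℚ) * (((∑ i, b i : ℕ) : ℚ) - 1) * (((∑ i, b i : ℕ) : ℚ) - 2))
    = ch ((∑ i, b i : ℕ) : ℤ) ((n : ℤ) - ((∑ i, c i : ℕ) : ℤ)) *
        ∑ t, x t *
          ((b t : ℚ) * ((b t : ℚ) - 1) * ((b t : ℚ) - 2) *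
              (((n : ℚ) - ((∑ i, c i : ℕ) : ℚ)) * (((n : ℚ) - ((∑ i, c i : ℕ) : ℚ)) - 1) * (((n : ℚ) - ((∑ i, c i : ℕ) : ℚ)) - 2))
            + 3 * ((c t : ℚ) + 1) * ((b t : ℚ) * ((b t : ℚ) - 1)) *
              (((n : ℚ) - ((∑ i, c i : ℕ) : ℚ)) * (((n : ℚ) - ((∑ i, c i : ℕ) : ℚ)) - 1) * (((∑ i, b i : ℕ) : ℚ) - 2))
            + (3 * (c t : ℚ) ^ 2 + 3 * (c t : ℚ) + 1) * (b t : ℚ) *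
              (((n : ℚ) - ((∑ i, c i : ℕ) : ℚ)) * (((∑ i, b i : ℕ) : ℚ) - 1) * (((∑ i, b i : ℕ) : ℚ) - 2))
            + (c t : ℚ) ^ 3 *
              (((∑ i, b i : ℕ) : ℚ) * (((∑ i, b i : ℕ) : ℚ) - 1) * (((∑ i, b i : ℕ) : ℚ) - 2))) := by
  set B : ℤ := ((∑ i, b i : ℕ) : ℤ) with hB
  set M : ℤ := (n : ℤ) - ((∑ i, c i : ℕ) : ℤ) with hM
  -- Step 1 : swap the sums
  have hswap : (∑ k ∈ Finset.Nat.antidiagonalTuple m n,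
        (∏ i, ch (b i) ((k i : ℤ) - c i)) * (∑ i, x i * (k i : ℚ) ^ 3))
      = ∑ t, x t * ∑ k ∈ Finset.Nat.antidiagonalTuple m n,
          (∏ i, ch (b i) ((k i : ℤ) - c i)) * (k t : ℚ) ^ 3 := by
    calc (∑ k ∈ Finset.Nat.antidiagonalTuple m n,
        (∏ i, ch (b i) ((k i : ℤ) - c i)) * (∑ i, x i * (k i : ℚ) ^ 3))
        = ∑ k ∈ Finset.Nat.antidiagonalTuple m n, ∑ t,
            x t * ((∏ i, ch (b i) ((k i : ℤ) - c i)) * (k t : ℚ) ^ 3) := by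
          refine Finset.sum_congr rfl fun k _ => ?_
          rw [Finset.mul_sum]
          exact Finset.sum_congr rfl fun t _ => by ring
      _ = ∑ t, ∑ k ∈ Finset.Nat.antidiagonalTuple m n,
            x t * ((∏ i, ch (b i) ((k i : ℤ) - c i)) * (k t : ℚ) ^ 3) := Finset.sum_comm
      _ = ∑ t, x t * ∑ k ∈ Finset.Nat.antidiagonalTuple m n,
            (∏ i, ch (b i) ((k i : ℤ) - c i)) * (k t : ℚ) ^ 3 := by
          exact Finset.sum_congr rfl fun t _ => (Finset.mul_sum _ _ _).symm
  -- Step 2 : inner moment evaluation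
  have hinner : ∀ t : Fin m, ∑ k ∈ Finset.Nat.antidiagonalTuple m n,
      (∏ i, ch (b i) ((k i : ℤ) - c i)) * (k t : ℚ) ^ 3
      = ((b t : ℚ) * ((b t : ℚ) - 1) * ((b t : ℚ) - 2)) * ch (B - 3) (M - 3)
        + (3 * (c t : ℚ) + 3) * (((b t : ℚ) * ((b t : ℚ) - 1)) * ch (B - 2) (M - 2))
        + (3 * (c t : ℚ) ^ 2 + 3 * (c t : ℚ) + 1) * ((b t : ℚ) * ch (B - 1) (M - 1))
        + (c t : ℚ) ^ 3 * ch B M := by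
    intro t
    have hexp : ∀ k ∈ Finset.Nat.antidiagonalTuple m n,
        (∏ i, ch (b i) ((k i : ℤ) - c i)) * (k t : ℚ) ^ 3
        = (∏ i, ch (b i) ((k i : ℤ) - c i)) * ∏ l ∈ Finset.range 3, ((k t : ℚ) - c t - l)
          + (3 * (c t : ℚ) + 3) * ((∏ i, ch (b i) ((k i : ℤ) - c i)) * ∏ l ∈ Finset.range 2, ((k t : ℚ) - c t - l))
          + (3 * (c t : ℚ) ^ 2 + 3 * (c t : ℚ) + 1) * ((∏ i, ch (b i) ((k i : ℤ) - c i)) * ∏ l ∈ Finset.range 1, ((k t : ℚ) - c t - l))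
          + (c t : ℚ) ^ 3 * ((∏ i, ch (b i) ((k i : ℤ) - c i)) * ∏ l ∈ Finset.range 0, ((k t : ℚ) - c t - l)) := by
      intro k _
      simp only [Finset.prod_range_succ, Finset.prod_range_zero]
      push_cast
      ring
    rw [Finset.sum_congr rfl hexp, Finset.sum_add_distrib, Finset.sum_add_distrib,
      Finset.sum_add_distrib, ← Finset.mul_sum, ← Finset.mul_sum, ← Finset.mul_sum,
      lemM t b c 3 n, lemM t b c 2 n, lemM t b c 1 n, lemM t b c 0 n]
    simp only [Finset.prod_range_succ, Finset.prod_range_zero]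
    rw [hB, hM]
    push_cast
    ring
  -- Step 3 : multiply by the factor and use the ch relations
  rw [hswap, Finset.sum_mul, Finset.mul_sum]
  refine Finset.sum_congr rfl fun t _ => ?_
  rw [hinner t]
  have r1 := rel1 B M
  have r2 := rel2 B M
  have r3 := rel3 B M
  have hBq : ((B : ℤ) : ℚ) = ((∑ i, b i : ℕ) : ℚ) := by rw [hB]; push_cast; ring
  have hMq : ((M : ℤ) : ℚ) = (n : ℚ) - ((∑ i, c i : ℕ) : ℚ) := by rw [hM]; push_cast; ring
  rw [hBq, hMq] at r1 r2 r3
  linear_combination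
    (x t * ((b t : ℚ) * ((b t : ℚ) - 1) * ((b t : ℚ) - 2))) * r3
    + (x t * (3 * (c t : ℚ) + 3) * ((b t : ℚ) * ((b t : ℚ) - 1)) * (((∑ i, b i : ℕ) : ℚ) - 2)) * r2
    + (x t * (3 * (c t : ℚ) ^ 2 + 3 * (c t : ℚ) + 1) * (b t : ℚ) * ((((∑ i, b i : ℕ) : ℚ) - 1) * (((∑ i, b i : ℕ) : ℚ) - 2))) * r1

theorem stmt8 (m n : ℕ) (hm : 1 ≤ m) (a c : Fin m → ℕ) (x : Fin m → ℚ) :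
    (∑ k ∈ Finset.Nat.antidiagonalTuple m n, (∏ i, ch (a i) (k i) * ch (k i) (c i)) * (∑ i, x i * (k i : ℚ) ^ 3))
        * (((∑ i, (a i : ℚ)) - (∑ i, (c i : ℚ))) * ((∑ i, (a i : ℚ)) - (∑ i, (c i : ℚ)) - 1) * ((∑ i, (a i : ℚ)) - (∑ i, (c i : ℚ)) - 2))
      = ch ((∑ i, (a i : ℤ)) - ∑ i, (c i : ℤ)) ((n : ℤ) - ∑ i, (c i : ℤ)) * (∏ i, ch (a i) (c i))
        * (((n : ℚ) - (∑ i, (c i : ℚ))) * ((n : ℚ) - (∑ i, (c i : ℚ)) - 1) * (((n : ℚ) - (∑ i, (c i : ℚ)) - 2) * (∑ i, x i * (a i : ℚ) ^ 3)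
              + ((∑ i, (a i : ℚ)) - (n : ℚ)) * ((∑ i, x i * (c i : ℚ)) - (∑ i, x i * (a i : ℚ)) + 3 * ((∑ i, x i * (a i : ℚ) ^ 2 * (c i : ℚ)) + (∑ i, x i * (a i : ℚ) ^ 2) - (∑ i, x i * (a i : ℚ) * (c i : ℚ)))))
           + ((∑ i, (a i : ℚ)) - (n : ℚ)) * ((∑ i, (a i : ℚ)) - (n : ℚ) - 1) * (((∑ i, (a i : ℚ)) - (n : ℚ) - 2) * (∑ i, x i * (c i : ℚ) ^ 3)
              + ((n : ℚ) - (∑ i, (c i : ℚ))) * ((∑ i, x i * (a i : ℚ)) - (∑ i, x i * (c i : ℚ)) + 3 * ((∑ i, x i * (a i : ℚ) * (c i : ℚ) ^ 2) - (∑ i, x i * (c i : ℚ) ^ 2) + (∑ i, x i * (a i : ℚ) * (c i : ℚ)))))) := by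
  by_cases hac : ∀ i, c i ≤ a i
  · -- main case
    have hbc : ∀ i : Fin m, ((a i - c i : ℕ) : ℚ) = (a i : ℚ) - c i := fun i => by
      rw [Nat.cast_sub (hac i)]
    have hBq : ((∑ i, (a i - c i) : ℕ) : ℚ) = (∑ i, (a i : ℚ)) - (∑ i, (c i : ℚ)) := by
      rw [Nat.cast_sum, ← Finset.sum_sub_distrib]
      exact Finset.sum_congr rfl fun i _ => hbc i
    have hCq : ((∑ i, c i : ℕ) : ℚ) = ∑ i, (c i : ℚ) := by push_cast; rfl
    have hBch : ((∑ i, (a i : ℤ)) - ∑ i, (c i : ℤ)) = ((∑ i, (a i - c i) : ℕ) : ℤ) := by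
      rw [Nat.cast_sum, ← Finset.sum_sub_distrib]
      exact Finset.sum_congr rfl fun i _ => by have := hac i; omega
    have hCz : (∑ i, (c i : ℤ)) = ((∑ i, c i : ℕ) : ℤ) := by push_cast; rfl
    have hsplit : ∀ k ∈ Finset.Nat.antidiagonalTuple m n,
        (∏ i, ch (a i) (k i) * ch (k i) (c i)) * (∑ i, x i * (k i : ℚ) ^ 3)
          = (∏ i, ch (a i) (c i)) *
              ((∏ i, ch ((a i - c i : ℕ)) ((k i : ℤ) - c i)) * (∑ i, x i * (k i : ℚ) ^ 3)) := by
      intro k _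
      rw [show (∏ i, ch (a i) (k i) * ch (k i) (c i))
            = (∏ i, ch (a i) (c i)) * ∏ i, ch ((a i - c i : ℕ)) ((k i : ℤ) - c i) by
          rw [← Finset.prod_mul_distrib]
          exact Finset.prod_congr rfl fun i _ => ch_split_s8 (a i) (c i) (k i) (hac i)]
      ring
    rw [Finset.sum_congr rfl hsplit, ← Finset.mul_sum, ← hBq, mul_assoc]
    have haux := main_aux m n (fun i => a i - c i) c x
    rw [haux, hBch, hCz]
    rw [show ((n : ℚ) - (∑ i, (c i : ℚ))) = ((n : ℚ) - ((∑ i, c i : ℕ) : ℚ)) by rw [hCq]]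
    have hfinal : (∑ t, x t *
          (((a t - c t : ℕ) : ℚ) * (((a t - c t : ℕ) : ℚ) - 1) * (((a t - c t : ℕ) : ℚ) - 2) *
              (((n : ℚ) - ((∑ i, c i : ℕ) : ℚ)) * (((n : ℚ) - ((∑ i, c i : ℕ) : ℚ)) - 1) * (((n : ℚ) - ((∑ i, c i : ℕ) : ℚ)) - 2))
            + 3 * ((c t : ℚ) + 1) * (((a t - c t : ℕ) : ℚ) * (((a t - c t : ℕ) : ℚ) - 1)) *
              (((n : ℚ) - ((∑ i, c i : ℕ) : ℚ)) * (((n : ℚ) - ((∑ i, c i : ℕ) : ℚ)) - 1) * (((∑ i, (a i - c i) : ℕ) : ℚ) - 2))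
            + (3 * (c t : ℚ) ^ 2 + 3 * (c t : ℚ) + 1) * ((a t - c t : ℕ) : ℚ) *
              (((n : ℚ) - ((∑ i, c i : ℕ) : ℚ)) * (((∑ i, (a i - c i) : ℕ) : ℚ) - 1) * (((∑ i, (a i - c i) : ℕ) : ℚ) - 2))
            + (c t : ℚ) ^ 3 *
              (((∑ i, (a i - c i) : ℕ) : ℚ) * (((∑ i, (a i - c i) : ℕ) : ℚ) - 1) * (((∑ i, (a i - c i) : ℕ) : ℚ) - 2))))
        = (((n : ℚ) - ((∑ i, c i : ℕ) : ℚ)) * (((n : ℚ) - ((∑ i, c i : ℕ) : ℚ)) - 1) * ((((n : ℚ) - ((∑ i, c i : ℕ) : ℚ)) - 2) * (∑ i, x i * (a i : ℚ) ^ 3)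
              + ((∑ i, (a i : ℚ)) - (n : ℚ)) * ((∑ i, x i * (c i : ℚ)) - (∑ i, x i * (a i : ℚ)) + 3 * ((∑ i, x i * (a i : ℚ) ^ 2 * (c i : ℚ)) + (∑ i, x i * (a i : ℚ) ^ 2) - (∑ i, x i * (a i : ℚ) * (c i : ℚ)))))
           + ((∑ i, (a i : ℚ)) - (n : ℚ)) * ((∑ i, (a i : ℚ)) - (n : ℚ) - 1) * (((∑ i, (a i : ℚ)) - (n : ℚ) - 2) * (∑ i, x i * (c i : ℚ) ^ 3)
              + ((n : ℚ) - ((∑ i, c i : ℕ) : ℚ)) * ((∑ i, x i * (a i : ℚ)) - (∑ i, x i * (c i : ℚ)) + 3 * ((∑ i, x i * (a i : ℚ) * (c i : ℚ) ^ 2) - (∑ i, x i * (c i : ℚ) ^ 2) + (∑ i, x i * (a i : ℚ) * (c i : ℚ)))))) := by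
      simp only [hbc, hBq, hCq]
      trans (∑ t, ((((n : ℚ) - ∑ i, (c i : ℚ)) * (((n : ℚ) - ∑ i, (c i : ℚ)) - 1) * (((n : ℚ) - ∑ i, (c i : ℚ)) - 2)) * (x t * (a t : ℚ)^3) + (3 * ((n : ℚ) - ∑ i, (c i : ℚ))^2 * ((∑ i, (a i : ℚ)) - ∑ i, (c i : ℚ)) - 3 * ((n : ℚ) - ∑ i, (c i : ℚ))^3 + 3 * ((n : ℚ) - ∑ i, (c i : ℚ))^2 - 3 * ((n : ℚ) - ∑ i, (c i : ℚ)) * ((∑ i, (a i : ℚ)) - ∑ i, (c i : ℚ))) * (x t * (a t : ℚ)^2 * (c t : ℚ)) + (3 * ((n : ℚ) - ∑ i, (c i : ℚ))^2 * ((∑ i, (a i : ℚ)) - ∑ i, (c i : ℚ)) - 3 * ((n : ℚ) - ∑ i, (c i : ℚ))^3 + 3 * ((n : ℚ) - ∑ i, (c i : ℚ))^2 - 3 * ((n : ℚ) - ∑ i, (c i : ℚ)) * ((∑ i, (a i : ℚ)) - ∑ i, (c i : ℚ))) * (x t * (a t : ℚ)^2)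
        + (3 * ((n : ℚ) - ∑ i, (c i : ℚ)) * ((∑ i, (a i : ℚ)) - ∑ i, (c i : ℚ))^2 - 6 * ((n : ℚ) - ∑ i, (c i : ℚ))^2 * ((∑ i, (a i : ℚ)) - ∑ i, (c i : ℚ)) + 3 * ((n : ℚ) - ∑ i, (c i : ℚ))^3 + 3 * ((n : ℚ) - ∑ i, (c i : ℚ))^2 - 3 * ((n : ℚ) - ∑ i, (c i : ℚ)) * ((∑ i, (a i : ℚ)) - ∑ i, (c i : ℚ))) * (x t * (a t : ℚ) * (c t : ℚ)^2) + (3 * ((n : ℚ) - ∑ i, (c i : ℚ)) * ((∑ i, (a i : ℚ)) - ∑ i, (c i : ℚ))^2 - 9 * ((n : ℚ) - ∑ i, (c i : ℚ))^2 * ((∑ i, (a i : ℚ)) - ∑ i, (c i : ℚ)) + 6 * ((n : ℚ) - ∑ i, (c i : ℚ))^3) * (x t * (a t : ℚ) * (c t : ℚ)) + (((n : ℚ) - ∑ i, (c i : ℚ)) * ((∑ i, (a i : ℚ)) - ∑ i, (c i : ℚ))^2 - 3 * ((n : ℚ) - ∑ i, (c i : ℚ))^2 * ((∑ i, (a i :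 ℚ)) - ∑ i, (c i : ℚ)) + 2 * ((n : ℚ) - ∑ i, (c i : ℚ))^3) * (x t * (a t : ℚ))
        + (((∑ i, (a i : ℚ)) - ∑ i, (c i : ℚ))^3 - 3 * ((∑ i, (a i : ℚ)) - ∑ i, (c i : ℚ))^2 + 2 * ((∑ i, (a i : ℚ)) - ∑ i, (c i : ℚ)) - ((n : ℚ) - ∑ i, (c i : ℚ))^3 + 3 * ((n : ℚ) - ∑ i, (c i : ℚ))^2 * ((∑ i, (a i : ℚ)) - ∑ i, (c i : ℚ)) - 3 * ((n : ℚ) - ∑ i, (c i : ℚ)) * ((∑ i, (a i : ℚ)) - ∑ i, (c i : ℚ))^2 - 3 * ((n : ℚ) - ∑ i, (c i : ℚ))^2 + 6 * ((n : ℚ) - ∑ i, (c i : ℚ)) * ((∑ i, (a i : ℚ)) - ∑ i, (c i : ℚ)) - 2 * ((n : ℚ) - ∑ i, (c i : ℚ))) * (x t * (c t : ℚ)^3) + (-3 * ((n : ℚ) - ∑ i, (c i : ℚ)) * ((∑ i, (a i : ℚ)) - ∑ i, (c i : ℚ))^2 + 6 * ((n : ℚ) - ∑ i, (c i : ℚ))^2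 * ((∑ i, (a i : ℚ)) - ∑ i, (c i : ℚ)) - 3 * ((n : ℚ) - ∑ i, (c i : ℚ))^3 - 3 * ((n : ℚ) - ∑ i, (c i : ℚ))^2 + 3 * ((n : ℚ) - ∑ i, (c i : ℚ)) * ((∑ i, (a i : ℚ)) - ∑ i, (c i : ℚ))) * (x t * (c t : ℚ)^2) + (-(((n : ℚ) - ∑ i, (c i : ℚ)) * ((∑ i, (a i : ℚ)) - ∑ i, (c i : ℚ))^2) + 3 * ((n : ℚ) - ∑ i, (c i : ℚ))^2 * ((∑ i, (a i : ℚ)) - ∑ i, (c i : ℚ)) - 2 * ((n : ℚ) - ∑ i, (c i : ℚ))^3) * (x t * (c t : ℚ))))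
      · exact Finset.sum_congr rfl fun t _ => by ring
      · simp only [Finset.sum_add_distrib, ← Finset.mul_sum]
        ring
    rw [hfinal]
    ring
  · -- degenerate case : some c i > a i
    push_neg at hac
    obtain ⟨i0, hi0⟩ := hac
    have hR : (∏ i, ch (a i) (c i)) = 0 :=
      Finset.prod_eq_zero (Finset.mem_univ i0) (ch_of_lt (by exact_mod_cast hi0))
    have hL : (∑ k ∈ Finset.Nat.antidiagonalTuple m n,
        (∏ i, ch (a i) (k i) * ch (k i) (c i)) * (∑ i, x i * (k i : ℚ) ^ 3)) = 0 := by
      apply Finset.sum_eq_zero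
      intro k _
      have hz : ch (a i0) (k i0) * ch (k i0) (c i0) = 0 := by
        rcases lt_or_ge (a i0 : ℤ) (k i0 : ℤ) with h | h
        · rw [ch_of_lt h]; ring
        · rw [ch_of_lt (show (k i0 : ℤ) < (c i0 : ℤ) by omega)]; ring
      rw [Finset.prod_eq_zero (Finset.mem_univ i0) hz, zero_mul]
    rw [hL, hR]
    ring
end

section
/- For integer m ≥ 1, sequences of nonnegative integers a_i and c_i with c_i ≤ a_i, and rationals x_i, four times the unrestricted sum over tuples (k_1,...,k_m) with 0 ≤ k_i ≤ a_i of [∏ C(a_i,k_i)C(k_i,c_i)] * (∑ x_i k_i)^2 equals 2^{A_0-C_0} * [∏ C(a_i,c_i)] * [A_2 - C_2 + (A_1 + C_1)^2]. -/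
open Finset

lemma pascal_sum (n : ℕ) (f : ℕ → ℚ) :
    ∑ j ∈ range (n+2), ((n+1).choose j : ℚ) * f j
      = ∑ j ∈ range (n+1), (n.choose j : ℚ) * (f j + f (j+1)) := by
  have h2 : ∑ j ∈ range (n+1), (n.choose (j+1) : ℚ) * f (j+1)
      = ∑ j ∈ range (n+1), (n.choose j : ℚ) * f j - f 0 := by
    have h := Finset.sum_range_succ' (fun j => (n.choose j : ℚ) * f j) (n+1)
    rw [Finset.sum_range_succ (fun j => (n.choose j : ℚ) * f j) (n+1)] at h
    simp only [Nat.choose_succ_self, Nat.cast_zero, zero_mul, add_zero,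
      Nat.choose_zero_right, Nat.cast_one, one_mul] at h
    linarith
  rw [Finset.sum_range_succ' (fun j => ((n+1).choose j : ℚ) * f j) (n+1)]
  have h1 : ∀ j : ℕ, (((n+1).choose (j+1) : ℚ)) = (n.choose j : ℚ) + n.choose (j+1) := by
    intro j; rw [Nat.choose_succ_succ]; push_cast; ring
  simp only [h1, add_mul]
  rw [Finset.sum_add_distrib, h2]
  simp only [Nat.choose_zero_right, Nat.cast_one, one_mul]
  have hC : ∑ j ∈ range (n+1), (n.choose j : ℚ) * (f j + f (j+1))
      = ∑ j ∈ range (n+1), (n.choose j : ℚ) * f j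
        + ∑ j ∈ range (n+1), (n.choose j : ℚ) * f (j+1) := by
    rw [← Finset.sum_add_distrib]
    exact Finset.sum_congr rfl (fun j _ => by ring)
  linarith

lemma mom0 (n : ℕ) : ∑ j ∈ range (n+1), (n.choose j : ℚ) = 2^n := by
  exact_mod_cast congrArg (Nat.cast : ℕ → ℚ) (Nat.sum_range_choose n)

lemma mom1 (n : ℕ) : ∑ j ∈ range (n+1), (n.choose j : ℚ) * j = n * 2^n / 2 := by
  induction n with
  | zero => simp
  | succ n ih =>
    have := pascal_sum n (fun j => (j : ℚ))
    rw [show n + 1 + 1 = n + 2 from rfl, this]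
    have e : ∀ j ∈ range (n+1), (n.choose j : ℚ) * ((j:ℚ) + (j+1:ℕ))
        = 2 * ((n.choose j : ℚ) * j) + (n.choose j : ℚ) := by
      intro j _; push_cast; ring
    rw [Finset.sum_congr rfl e, Finset.sum_add_distrib, ← Finset.mul_sum, ih, mom0]
    push_cast; ring

lemma mom2 (n : ℕ) : ∑ j ∈ range (n+1), (n.choose j : ℚ) * j^2 = n * (n+1) * 2^n / 4 := by
  induction n with
  | zero => simp
  | succ n ih =>
    have := pascal_sum n (fun j => (j : ℚ)^2)
    rw [show n + 1 + 1 = n + 2 from rfl, this]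
    have e : ∀ j ∈ range (n+1), (n.choose j : ℚ) * (((j:ℚ))^2 + ((j+1:ℕ):ℚ)^2)
        = 2 * ((n.choose j : ℚ) * j^2) + 2 * ((n.choose j : ℚ) * j) + (n.choose j : ℚ) := by
      intro j _; push_cast; ring
    rw [Finset.sum_congr rfl e, Finset.sum_add_distrib, Finset.sum_add_distrib,
      ← Finset.mul_sum, ← Finset.mul_sum, ih, mom1, mom0]
    push_cast; ring

lemma shift (a c0 : ℕ) (h : c0 ≤ a) (F : ℕ → ℚ) :
    ∑ k ∈ range (a+1), ((a.choose k : ℚ) * (k.choose c0 : ℚ)) * F k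
      = (a.choose c0 : ℚ) * ∑ j ∈ range (a - c0 + 1), ((a-c0).choose j : ℚ) * F (c0 + j) := by
  have hsub : Finset.Ico c0 (a+1) ⊆ Finset.range (a+1) := by
    intro k hk; simp only [Finset.mem_Ico] at hk; simp only [Finset.mem_range]; omega
  rw [← Finset.sum_subset hsub ?van]
  case van =>
    intro k hk hk2
    simp only [Finset.mem_range] at hk
    simp only [Finset.mem_Ico] at hk2
    have : k < c0 := by omega
    rw [Nat.choose_eq_zero_of_lt this]; simp
  rw [Finset.sum_Ico_eq_sum_range]
  have hn : a + 1 - c0 = a - c0 + 1 := by omega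
  rw [hn, Finset.mul_sum]
  refine Finset.sum_congr rfl ?_
  intro j hj
  simp only [Finset.mem_range] at hj
  have hj' : j ≤ a - c0 := by omega
  have hk : c0 + j ≤ a := by omega
  have := Nat.choose_mul (n := a) (k := c0 + j) (s := c0) (Nat.le_add_right _ _)
  rw [Nat.add_sub_cancel_left] at this
  have : ((a.choose (c0+j) : ℚ) * ((c0+j).choose c0 : ℚ)) = (a.choose c0 : ℚ) * ((a-c0).choose j : ℚ) := by
    exact_mod_cast congrArg (Nat.cast : ℕ → ℚ) this
  rw [this]; ring

lemma colS0 (a c0 : ℕ) (h : c0 ≤ a) :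
    ∑ t ∈ range (a+1), ((a.choose t : ℚ) * (t.choose c0 : ℚ))
      = (a.choose c0 : ℚ) * 2^(a-c0) := by
  have := shift a c0 h (fun _ => (1:ℚ))
  simpa [mom0] using this

lemma colS1 (a c0 : ℕ) (h : c0 ≤ a) :
    ∑ t ∈ range (a+1), ((a.choose t : ℚ) * (t.choose c0 : ℚ)) * t
      = (a.choose c0 : ℚ) * 2^(a-c0) * (((a:ℚ) + c0)/2) := by
  have hs := shift a c0 h (fun t => (t : ℚ))
  rw [hs]
  have : ∑ j ∈ range (a - c0 + 1), ((a-c0).choose j : ℚ) * ((c0 + j : ℕ) : ℚ)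
      = (c0 : ℚ) * 2^(a-c0) + (a - c0 : ℕ) * 2^(a-c0) / 2 := by
    have e : ∀ j ∈ range (a - c0 + 1), ((a-c0).choose j : ℚ) * ((c0 + j : ℕ) : ℚ)
        = (c0:ℚ) * ((a-c0).choose j : ℚ) + ((a-c0).choose j : ℚ) * j := by
      intro j _; push_cast; ring
    rw [Finset.sum_congr rfl e, Finset.sum_add_distrib, ← Finset.mul_sum, mom0, mom1]
  rw [this, Nat.cast_sub h]
  ring

lemma colS2 (a c0 : ℕ) (h : c0 ≤ a) :
    ∑ t ∈ range (a+1), ((a.choose t : ℚ) * (t.choose c0 : ℚ)) * t^2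
      = (a.choose c0 : ℚ) * 2^(a-c0) * ((((a:ℚ) + c0)/2)^2 + ((a:ℚ) - c0)/4) := by
  have hs := shift a c0 h (fun t => (t : ℚ)^2)
  rw [hs]
  have : ∑ j ∈ range (a - c0 + 1), ((a-c0).choose j : ℚ) * ((c0 + j : ℕ) : ℚ)^2
      = (c0:ℚ)^2 * 2^(a-c0) + 2*c0*((a - c0 : ℕ) * 2^(a-c0) / 2)
        + (a-c0:ℕ) * ((a-c0:ℕ)+1) * 2^(a-c0) / 4 := by
    have e : ∀ j ∈ range (a - c0 + 1), ((a-c0).choose j : ℚ) * ((c0 + j : ℕ) : ℚ)^2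
        = (c0:ℚ)^2 * ((a-c0).choose j : ℚ) + 2*c0*(((a-c0).choose j : ℚ) * j)
          + ((a-c0).choose j : ℚ) * j^2 := by
      intro j _; push_cast; ring
    rw [Finset.sum_congr rfl e, Finset.sum_add_distrib, Finset.sum_add_distrib,
      ← Finset.mul_sum, ← Finset.mul_sum, mom0, mom1, mom2]
  rw [this, Nat.cast_sub h]
  ring

theorem stmt14 (m : ℕ) (hm : 1 ≤ m) (a c : Fin m → ℕ) (hca : ∀ i, c i ≤ a i)
    (x : Fin m → ℚ) :
    4 * (∑ k ∈ Fintype.piFinset (fun i => Finset.range (a i + 1)), (∏ i, ((a i).choose (k i) : ℚ) * ((k i).choose (c i) : ℚ)) * (∑ i, x i * (k i : ℚ)) ^ 2)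
      = (2 : ℚ) ^ ((∑ i, a i) - ∑ i, c i) * (∏ i, ((a i).choose (c i) : ℚ)) * ((∑ i, x i ^ 2 * (a i : ℚ)) - (∑ i, x i ^ 2 * (c i : ℚ)) + ((∑ i, x i * (a i : ℚ)) + (∑ i, x i * (c i : ℚ))) ^ 2) := by
  classical
  set q : Fin m → ℚ := fun i => ((a i : ℚ) + c i)/2 with hq
  set d : Fin m → ℚ := fun i => ((a i : ℚ) - c i)/4 with hd
  set P : ℚ := (2 : ℚ) ^ ((∑ i, a i) - ∑ i, c i) * (∏ i, ((a i).choose (c i) : ℚ)) with hP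
  have hPB : (∏ l, ((a l).choose (c l) : ℚ) * 2 ^ (a l - c l)) = P := by
    rw [Finset.prod_mul_distrib, hP, mul_comm]
    congr 1
    rw [Finset.prod_pow_eq_pow_sum]
    congr 1
    rw [← Finset.sum_tsub_distrib _ (fun i _ => hca i)]
  have key : ∀ i j : Fin m,
      (∑ k ∈ Fintype.piFinset (fun i => Finset.range (a i + 1)),
        (∏ l, ((a l).choose (k l) : ℚ) * ((k l).choose (c l) : ℚ)) * (k i : ℚ) * (k j : ℚ))
      = P * (q i * q j + if i = j then d i else 0) := by
    intro i j
    have hfac : ∀ k : Fin m → ℕ,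
        (∏ l, ((a l).choose (k l) : ℚ) * ((k l).choose (c l) : ℚ)) * (k i : ℚ) * (k j : ℚ)
        = ∏ l, (((a l).choose (k l) : ℚ) * ((k l).choose (c l) : ℚ)
            * (if l = i then (k l : ℚ) else 1) * (if l = j then (k l : ℚ) else 1)) := by
      intro k
      simp only [Finset.prod_mul_distrib, Finset.prod_ite_eq', Finset.mem_univ, if_true]
      try ring
    rw [Finset.sum_congr rfl (fun k _ => hfac k)]
    have hpus := Finset.prod_univ_sum (fun i => Finset.range (a i + 1))
      (fun l t => ((a l).choose t : ℚ) * ((t).choose (c l) : ℚ)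
        * (if l = i then (t : ℚ) else 1) * (if l = j then (t : ℚ) else 1))
    rw [← hpus]
    have hcol : ∀ l : Fin m,
        (∑ t ∈ Finset.range (a l + 1),
          ((a l).choose t : ℚ) * ((t : ℕ).choose (c l) : ℚ)
            * (if l = i then (t : ℚ) else 1) * (if l = j then (t : ℚ) else 1))
        = (((a l).choose (c l) : ℚ) * 2 ^ (a l - c l)) *
            (if l = i then (if l = j then q l * q l + d l else q l)
              else (if l = j then q l else 1)) := by
      intro l
      by_cases hli : l = i
      · subst hli
        by_cases hlj : l = j
        · subst hlj
          simp only [eq_self_iff_true, if_true]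
          calc ∑ t ∈ Finset.range (a l + 1), ((a l).choose t : ℚ) * ((t : ℕ).choose (c l) : ℚ) * t * t
              = ∑ t ∈ Finset.range (a l + 1), (((a l).choose t : ℚ) * ((t : ℕ).choose (c l) : ℚ)) * t^2 := by
                refine Finset.sum_congr rfl fun t _ => by ring
            _ = ((a l).choose (c l) : ℚ) * 2 ^ (a l - c l) * (q l * q l + d l) := by
                rw [colS2 (a l) (c l) (hca l)]
                simp only [hq, hd]; ring
        · simp only [eq_self_iff_true, if_true, if_neg hlj, mul_one]
          rw [colS1 (a l) (c l) (hca l)]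
      · by_cases hlj : l = j
        · subst hlj
          simp only [if_neg hli, eq_self_iff_true, if_true, mul_one]
          rw [colS1 (a l) (c l) (hca l)]
        · simp only [if_neg hli, if_neg hlj, mul_one]
          exact colS0 (a l) (c l) (hca l)
    rw [Finset.prod_congr rfl (fun l _ => hcol l), Finset.prod_mul_distrib, hPB]
    congr 1
    by_cases hij : i = j
    · subst hij
      simp only [if_pos rfl, if_true]
      have : ∀ l : Fin m, (if l = i then (if l = i then q l * q l + d l else q l)
              else (if l = i then q l else 1)) = (if l = i then q l * q l + d l else 1) := by
        intro l; by_cases h : l = i <;> simp [h]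
      rw [Finset.prod_congr rfl (fun l _ => this l),
        Finset.prod_ite_eq' Finset.univ i (fun l => q l * q l + d l)]
      simp
    · simp only [if_neg hij, add_zero]
      have : ∀ l : Fin m, (if l = i then (if l = j then q l * q l + d l else q l)
              else (if l = j then q l else 1)) = (if l = i then q l else 1) * (if l = j then q l else 1) := by
        intro l
        by_cases h1 : l = i <;> by_cases h2 : l = j
        · exact absurd (h1 ▸ h2) hij
        · simp [h1, h2, hij]
        · have hji : ¬ j = i := fun h => hij h.symm
          simp [h1, h2, hji]
        · simp [h1, h2]
      rw [Finset.prod_congr rfl (fun l _ => this l), Finset.prod_mul_distrib,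
        Finset.prod_ite_eq' Finset.univ i q, Finset.prod_ite_eq' Finset.univ j q]
      simp
  have expand : (∑ k ∈ Fintype.piFinset (fun i => Finset.range (a i + 1)),
      (∏ l, ((a l).choose (k l) : ℚ) * ((k l).choose (c l) : ℚ)) * (∑ i, x i * (k i : ℚ)) ^ 2)
      = ∑ i, ∑ j, x i * x j *
        (∑ k ∈ Fintype.piFinset (fun i => Finset.range (a i + 1)),
          (∏ l, ((a l).choose (k l) : ℚ) * ((k l).choose (c l) : ℚ)) * (k i : ℚ) * (k j : ℚ)) := by
    calc (∑ k ∈ Fintype.piFinset (fun i => Finset.range (a i + 1)),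
        (∏ l, ((a l).choose (k l) : ℚ) * ((k l).choose (c l) : ℚ)) * (∑ i, x i * (k i : ℚ)) ^ 2)
        = ∑ k ∈ Fintype.piFinset (fun i => Finset.range (a i + 1)), ∑ i, ∑ j,
            x i * x j * ((∏ l, ((a l).choose (k l) : ℚ) * ((k l).choose (c l) : ℚ)) * (k i : ℚ) * (k j : ℚ)) := by
          refine Finset.sum_congr rfl fun k _ => ?_
          rw [sq, Finset.sum_mul_sum, Finset.mul_sum]
          refine Finset.sum_congr rfl fun i _ => ?_
          rw [Finset.mul_sum]
          exact Finset.sum_congr rfl fun j _ => by ring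
      _ = ∑ i, ∑ k ∈ Fintype.piFinset (fun i => Finset.range (a i + 1)), ∑ j,
            x i * x j * ((∏ l, ((a l).choose (k l) : ℚ) * ((k l).choose (c l) : ℚ)) * (k i : ℚ) * (k j : ℚ)) := Finset.sum_comm
      _ = ∑ i, ∑ j, ∑ k ∈ Fintype.piFinset (fun i => Finset.range (a i + 1)),
            x i * x j * ((∏ l, ((a l).choose (k l) : ℚ) * ((k l).choose (c l) : ℚ)) * (k i : ℚ) * (k j : ℚ)) := by
          exact Finset.sum_congr rfl fun i _ => Finset.sum_comm
      _ = ∑ i, ∑ j, x i * x j *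
            (∑ k ∈ Fintype.piFinset (fun i => Finset.range (a i + 1)),
              (∏ l, ((a l).choose (k l) : ℚ) * ((k l).choose (c l) : ℚ)) * (k i : ℚ) * (k j : ℚ)) := by
          refine Finset.sum_congr rfl fun i _ => Finset.sum_congr rfl fun j _ => ?_
          rw [Finset.mul_sum]
  rw [expand]
  have hinner : ∀ i : Fin m,
      (∑ j, x i * x j * (P * (q i * q j + if i = j then d i else 0)))
      = P * (x i * q i) * (∑ j, x j * q j) + P * (x i * x i * d i) := by
    intro i
    have hpt : ∀ j : Fin m, x i * x j * (P * (q i * q j + if i = j then d i else 0))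
        = P * (x i * q i) * (x j * q j) + (if i = j then P * (x i * x i * d i) else 0) := by
      intro j
      by_cases h : i = j
      · subst h; simp only [eq_self_iff_true, if_true]; ring
      · simp only [if_neg h]; ring
    rw [Finset.sum_congr rfl (fun j _ => hpt j), Finset.sum_add_distrib, ← Finset.mul_sum,
      Finset.sum_ite_eq Finset.univ i (fun _ => P * (x i * x i * d i))]
    simp only [Finset.mem_univ, if_true]
  have e2 : (∑ i, ∑ j, x i * x j *
        (∑ k ∈ Fintype.piFinset (fun i => Finset.range (a i + 1)),
          (∏ l, ((a l).choose (k l) : ℚ) * ((k l).choose (c l) : ℚ)) * (k i : ℚ) * (k j : ℚ)))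
      = ∑ i, (P * (x i * q i) * (∑ j, x j * q j) + P * (x i * x i * d i)) := by
    refine Finset.sum_congr rfl fun i _ => ?_
    rw [← hinner i]
    refine Finset.sum_congr rfl fun j _ => ?_
    rw [key i j]
  rw [e2, Finset.sum_add_distrib, ← Finset.sum_mul, ← Finset.mul_sum, ← Finset.mul_sum]
  have h1 : (∑ i, x i * q i) * 2 = (∑ i, x i * (a i : ℚ)) + (∑ i, x i * (c i : ℚ)) := by
    rw [← Finset.sum_add_distrib, Finset.sum_mul]
    exact Finset.sum_congr rfl fun i _ => by simp only [hq]; ring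
  have h2 : (∑ i, x i * x i * d i) * 4 = (∑ i, x i ^ 2 * (a i : ℚ)) - (∑ i, x i ^ 2 * (c i : ℚ)) := by
    rw [← Finset.sum_sub_distrib, Finset.sum_mul]
    exact Finset.sum_congr rfl fun i _ => by simp only [hd]; ring
  rw [← h1, ← h2]
  ring
end

section
/- For integer m ≥ 1, sequences of nonnegative integers a_i and c_i with c_i ≤ a_i, and rationals x_i and y_i, four times the unrestricted sum over tuples (k_1,...,k_m) with 0 ≤ k_i ≤ a_i of [∏ C(a_i,k_i)C(k_i,c_i)] * (∑ x_i k_i)(∑ y_i k_i) equals 2^{A_0-C_0} * [∏ C(a_i,c_i)] * [A_{1,1}* - C_{1,1}* + (A_1 + C_1)(A_1* + C_1*)]. -/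
open Finset

lemma pascalSum (n : ℕ) (f : ℕ → ℚ) :
    ∑ j ∈ range (n + 2), f j * (((n+1).choose j : ℕ) : ℚ)
      = ∑ j ∈ range (n + 1), f j * ((n.choose j : ℕ) : ℚ)
        + ∑ j ∈ range (n + 1), f (j + 1) * ((n.choose j : ℕ) : ℚ) := by
  rw [Finset.sum_range_succ' (fun j => f j * (((n+1).choose j : ℕ) : ℚ))]
  have h1 : ∀ i, (((n+1).choose (i+1) : ℕ) : ℚ) = (n.choose i : ℚ) + (n.choose (i+1) : ℚ) := by
    intro i; rw [Nat.choose_succ_succ]; push_cast; ring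
  simp only [h1, mul_add]
  rw [Finset.sum_add_distrib]
  have h2 : ∑ i ∈ range (n + 1), f (i + 1) * ((n.choose (i+1) : ℕ) : ℚ)
      = ∑ j ∈ range (n + 1), f j * ((n.choose j : ℕ) : ℚ) - f 0 := by
    rw [Finset.sum_range_succ, Nat.choose_succ_self,
      Finset.sum_range_succ' (fun j => f j * ((n.choose j : ℕ) : ℚ)) n]
    simp
  rw [h2, Nat.choose_zero_right]
  push_cast
  ring

lemma B0 (n : ℕ) : ∑ j ∈ range (n + 1), ((n.choose j : ℕ) : ℚ) = 2 ^ n := by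
  have := Nat.sum_range_choose n
  calc ∑ j ∈ range (n + 1), ((n.choose j : ℕ) : ℚ)
      = ((∑ j ∈ range (n + 1), n.choose j : ℕ) : ℚ) := by push_cast; ring
    _ = 2 ^ n := by rw [this]; push_cast; ring

lemma B1 (n : ℕ) : ∑ j ∈ range (n + 1), (j : ℚ) * ((n.choose j : ℕ) : ℚ) = n * 2 ^ n / 2 := by
  induction n with
  | zero => simp
  | succ n ih =>
    have := pascalSum n (fun j => (j : ℚ))
    rw [this, ih]
    have h : ∑ j ∈ range (n + 1), ((j : ℚ) + 1) * ((n.choose j : ℕ) : ℚ)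
        = ∑ j ∈ range (n + 1), (j : ℚ) * ((n.choose j : ℕ) : ℚ)
          + ∑ j ∈ range (n + 1), ((n.choose j : ℕ) : ℚ) := by
      rw [← Finset.sum_add_distrib]; apply Finset.sum_congr rfl; intros; ring
    push_cast
    push_cast at h
    rw [h, ih, B0]
    ring

lemma B2 (n : ℕ) : ∑ j ∈ range (n + 1), (j : ℚ)^2 * ((n.choose j : ℕ) : ℚ)
    = n * (n + 1) * 2 ^ n / 4 := by
  induction n with
  | zero => simp
  | succ n ih =>
    have := pascalSum n (fun j => (j : ℚ)^2)
    rw [this, ih]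
    have h : ∑ j ∈ range (n + 1), ((j : ℚ) + 1)^2 * ((n.choose j : ℕ) : ℚ)
        = ∑ j ∈ range (n + 1), (j : ℚ)^2 * ((n.choose j : ℕ) : ℚ)
          + 2 * ∑ j ∈ range (n + 1), (j : ℚ) * ((n.choose j : ℕ) : ℚ)
          + ∑ j ∈ range (n + 1), ((n.choose j : ℕ) : ℚ) := by
      rw [Finset.mul_sum, ← Finset.sum_add_distrib, ← Finset.sum_add_distrib]
      apply Finset.sum_congr rfl; intros; ring
    push_cast
    push_cast at h
    rw [h, ih, B0, B1]
    ring

lemma wReindex (a c : ℕ) (h : c ≤ a) (g : ℕ → ℚ) :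
    ∑ v ∈ range (a + 1), ((a.choose v : ℕ) : ℚ) * ((v.choose c : ℕ) : ℚ) * g v
      = ((a.choose c : ℕ) : ℚ)
        * ∑ j ∈ range (a - c + 1), (((a - c).choose j : ℕ) : ℚ) * g (c + j) := by
  rw [Finset.range_eq_Ico, ← Finset.sum_Ico_consecutive _ (Nat.zero_le c) (by omega : c ≤ a + 1)]
  have hz : ∑ v ∈ Ico 0 c, ((a.choose v : ℕ) : ℚ) * ((v.choose c : ℕ) : ℚ) * g v = 0 := by
    apply Finset.sum_eq_zero
    intro v hv
    rw [Nat.choose_eq_zero_of_lt (Finset.mem_Ico.1 hv).2]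
    simp
  rw [hz, zero_add, Finset.sum_Ico_eq_sum_range]
  have hn : a + 1 - c = a - c + 1 := by omega
  rw [hn, Finset.mul_sum, Finset.range_eq_Ico]
  apply Finset.sum_congr rfl
  intro j hj
  have hj' : j ≤ a - c := by have := (Finset.mem_Ico.1 hj).2; omega
  have key : a.choose (c + j) * (c + j).choose c = a.choose c * (a - c).choose j := by
    have := Nat.choose_mul (n := a) (k := c + j) (s := c) (by omega)
    simpa using this
  calc ((a.choose (c + j) : ℕ) : ℚ) * (((c + j).choose c : ℕ) : ℚ) * g (c + j)
      = ((a.choose (c + j) * (c + j).choose c : ℕ) : ℚ) * g (c + j) := by push_cast; ring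
    _ = ((a.choose c : ℕ) : ℚ) * ((((a - c).choose j : ℕ) : ℚ) * g (c + j)) := by
        rw [key]; push_cast; ring

lemma L0_s15 (a c : ℕ) (h : c ≤ a) :
    ∑ v ∈ range (a + 1), ((a.choose v : ℕ) : ℚ) * ((v.choose c : ℕ) : ℚ)
      = 2 ^ (a - c) * ((a.choose c : ℕ) : ℚ) := by
  have := wReindex a c h (fun _ => 1)
  simp only [mul_one] at this
  rw [this, B0]
  ring

lemma L1 (a c : ℕ) (h : c ≤ a) :
    ∑ v ∈ range (a + 1), ((a.choose v : ℕ) : ℚ) * ((v.choose c : ℕ) : ℚ) * (v : ℚ)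
      = 2 ^ (a - c) * ((a.choose c : ℕ) : ℚ) * (((a : ℚ) + (c : ℚ)) / 2) := by
  rw [wReindex a c h (fun v => (v : ℚ))]
  have hsplit : ∑ j ∈ range (a - c + 1), (((a - c).choose j : ℕ) : ℚ) * ((c + j : ℕ) : ℚ)
      = (c : ℚ) * (∑ j ∈ range (a - c + 1), (((a - c).choose j : ℕ) : ℚ))
        + ∑ j ∈ range (a - c + 1), (j : ℚ) * (((a - c).choose j : ℕ) : ℚ) := by
    rw [Finset.mul_sum, ← Finset.sum_add_distrib]
    apply Finset.sum_congr rfl; intros; push_cast; ring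
  rw [hsplit, B0, B1, Nat.cast_sub h]
  ring

lemma L2 (a c : ℕ) (h : c ≤ a) :
    ∑ v ∈ range (a + 1), ((a.choose v : ℕ) : ℚ) * ((v.choose c : ℕ) : ℚ) * (v : ℚ) ^ 2
      = 2 ^ (a - c) * ((a.choose c : ℕ) : ℚ)
        * ((((a : ℚ) + (c : ℚ)) / 2) ^ 2 + ((a : ℚ) - (c : ℚ)) / 4) := by
  rw [wReindex a c h (fun v => (v : ℚ) ^ 2)]
  have hsplit : ∑ j ∈ range (a - c + 1), (((a - c).choose j : ℕ) : ℚ) * ((c + j : ℕ) : ℚ) ^ 2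
      = (c : ℚ) ^ 2 * (∑ j ∈ range (a - c + 1), (((a - c).choose j : ℕ) : ℚ))
        + 2 * (c : ℚ) * ∑ j ∈ range (a - c + 1), (j : ℚ) * (((a - c).choose j : ℕ) : ℚ)
        + ∑ j ∈ range (a - c + 1), (j : ℚ) ^ 2 * (((a - c).choose j : ℕ) : ℚ) := by
    rw [Finset.mul_sum, Finset.mul_sum, ← Finset.sum_add_distrib, ← Finset.sum_add_distrib]
    apply Finset.sum_congr rfl; intros; push_cast; ring
  rw [hsplit, B0, B1, B2, Nat.cast_sub h]
  ring

lemma Tfact (m : ℕ) (a c : Fin m → ℕ) (hca : ∀ i, c i ≤ a i) (i j : Fin m) :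
    ∑ k ∈ Fintype.piFinset (fun i => Finset.range (a i + 1)),
      (∏ l, ((a l).choose (k l) : ℚ) * (((k l).choose (c l)) : ℚ)) * (k i : ℚ) * (k j : ℚ)
      = (∏ l, (2 : ℚ) ^ (a l - c l) * ((a l).choose (c l) : ℚ))
        * ((((a i : ℚ) + c i) / 2) * (((a j : ℚ) + c j) / 2)
            + if i = j then ((a i : ℚ) - c i) / 4 else 0) := by
  have step1 : ∑ k ∈ Fintype.piFinset (fun i => Finset.range (a i + 1)),
      (∏ l, ((a l).choose (k l) : ℚ) * (((k l).choose (c l)) : ℚ)) * (k i : ℚ) * (k j : ℚ)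
      = ∏ l, ∑ v ∈ Finset.range (a l + 1),
          ((a l).choose v : ℚ) * ((v.choose (c l)) : ℚ)
            * (if l = i then (v : ℚ) else 1) * (if l = j then (v : ℚ) else 1) := by
    rw [Finset.prod_univ_sum]
    apply Finset.sum_congr rfl
    intro k _
    simp only [Finset.prod_mul_distrib, Fintype.prod_ite_eq']
  rw [step1]
  have step2 : ∀ l, ∑ v ∈ Finset.range (a l + 1),
      ((a l).choose v : ℚ) * ((v.choose (c l)) : ℚ)
        * (if l = i then (v : ℚ) else 1) * (if l = j then (v : ℚ) else 1)
      = ((2 : ℚ) ^ (a l - c l) * ((a l).choose (c l) : ℚ))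
        * (if l = i then
            (if l = j then (((a l : ℚ) + c l) / 2) ^ 2 + ((a l : ℚ) - c l) / 4
             else ((a l : ℚ) + c l) / 2)
           else (if l = j then ((a l : ℚ) + c l) / 2 else 1)) := by
    intro l
    by_cases hi : l = i
    · by_cases hj : l = j
      · subst hi; subst hj
        simp only [eq_self_iff_true, if_true]
        have h2 : ∑ v ∈ Finset.range (a l + 1),
            ((a l).choose v : ℚ) * ((v.choose (c l)) : ℚ) * (v : ℚ) * (v : ℚ)
            = ∑ v ∈ Finset.range (a l + 1),
              ((a l).choose v : ℚ) * ((v.choose (c l)) : ℚ) * (v : ℚ) ^ 2 :=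
          Finset.sum_congr rfl fun v _ => by ring
        rw [h2, L2 _ _ (hca l)]
      · subst hi
        simp only [eq_self_iff_true, if_true, if_neg hj, mul_one]
        rw [L1 _ _ (hca l)]
    · by_cases hj : l = j
      · subst hj
        simp only [eq_self_iff_true, if_true, if_neg hi, mul_one]
        rw [L1 _ _ (hca l)]
      · simp only [if_neg hi, if_neg hj, mul_one]
        rw [L0_s15 _ _ (hca l)]
  simp only [step2]
  rw [Finset.prod_mul_distrib]
  congr 1
  by_cases hij : i = j
  · subst hij
    have hform : ∀ l : Fin m, (if l = i then
        (if l = i then (((a l : ℚ) + c l) / 2) ^ 2 + ((a l : ℚ) - c l) / 4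
         else ((a l : ℚ) + c l) / 2)
       else (if l = i then ((a l : ℚ) + c l) / 2 else 1))
      = (if l = i then (((a l : ℚ) + c l) / 2) ^ 2 + ((a l : ℚ) - c l) / 4 else 1) := by
      intro l; by_cases h : l = i <;> simp [h]
    simp only [hform]
    rw [Fintype.prod_ite_eq' i
      (fun l => (((a l : ℚ) + c l) / 2) ^ 2 + ((a l : ℚ) - c l) / 4)]
    simp only [eq_self_iff_true, if_true]
    ring
  · have hform : ∀ l : Fin m, (if l = i then
        (if l = j then (((a l : ℚ) + c l) / 2) ^ 2 + ((a l : ℚ) - c l) / 4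
         else ((a l : ℚ) + c l) / 2)
       else (if l = j then ((a l : ℚ) + c l) / 2 else 1))
      = (if l = i then ((a l : ℚ) + c l) / 2 else 1)
        * (if l = j then ((a l : ℚ) + c l) / 2 else 1) := by
      intro l
      have hji : ¬ j = i := fun h => hij h.symm
      by_cases h1 : l = i <;> by_cases h2 : l = j
      · exact absurd (h1.symm.trans h2) hij
      · simp [h1, h2, hij]
      · simp [h1, h2, hji]
      · simp [h1, h2]
    simp only [hform]
    rw [Finset.prod_mul_distrib,
      Fintype.prod_ite_eq' i (fun l => ((a l : ℚ) + c l) / 2),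
      Fintype.prod_ite_eq' j (fun l => ((a l : ℚ) + c l) / 2)]
    simp [hij]

lemma dsum (m : ℕ) (x y μ δ : Fin m → ℚ) (P : ℚ) :
    ∑ i, ∑ j, x i * y j * (P * (μ i * μ j + if i = j then δ i else 0))
      = P * ((∑ i, x i * μ i) * (∑ j, y j * μ j) + ∑ i, x i * y i * δ i) := by
  have hin : ∀ i : Fin m, ∑ j, x i * y j * (P * (μ i * μ j + if i = j then δ i else 0))
      = P * (x i * μ i) * (∑ j, y j * μ j) + P * (x i * y i * δ i) := by
    intro i
    have hterm : ∀ j, x i * y j * (P * (μ i * μ j + if i = j then δ i else 0))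
        = P * (x i * μ i) * (y j * μ j) + (if j = i then P * (x i * y j * δ j) else 0) := by
      intro j
      by_cases h : i = j
      · subst h; simp only [eq_self_iff_true, if_true]; ring
      · have h' : ¬ j = i := fun hh => h hh.symm
        simp only [if_neg h, if_neg h', add_zero]; ring
    simp only [hterm]
    rw [Finset.sum_add_distrib,
      Finset.sum_ite_eq' Finset.univ i (fun j => P * (x i * y j * δ j)), ← Finset.mul_sum]
    simp
  simp only [hin]
  rw [Finset.sum_add_distrib, ← Finset.sum_mul, ← Finset.mul_sum, ← Finset.mul_sum]
  ring

theorem stmt15 (m : ℕ) (hm : 1 ≤ m) (a c : Fin m → ℕ) (hca : ∀ i, c i ≤ a i)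
    (x y : Fin m → ℚ) :
    4 * (∑ k ∈ Fintype.piFinset (fun i => Finset.range (a i + 1)), (∏ i, ((a i).choose (k i) : ℚ) * ((k i).choose (c i) : ℚ)) * (∑ i, x i * (k i : ℚ)) * (∑ i, y i * (k i : ℚ)))
      = (2 : ℚ) ^ ((∑ i, a i) - ∑ i, c i) * (∏ i, ((a i).choose (c i) : ℚ)) * ((∑ i, x i * y i * (a i : ℚ)) - (∑ i, x i * y i * (c i : ℚ)) + ((∑ i, x i * (a i : ℚ)) + (∑ i, x i * (c i : ℚ))) * ((∑ i, y i * (a i : ℚ)) + (∑ i, y i * (c i : ℚ)))) := by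
  have expand : (∑ k ∈ Fintype.piFinset (fun i => Finset.range (a i + 1)),
        (∏ i, ((a i).choose (k i) : ℚ) * ((k i).choose (c i) : ℚ))
          * (∑ i, x i * (k i : ℚ)) * (∑ i, y i * (k i : ℚ)))
      = ∑ i, ∑ j, x i * y j *
          ∑ k ∈ Fintype.piFinset (fun i => Finset.range (a i + 1)),
            (∏ l, ((a l).choose (k l) : ℚ) * ((k l).choose (c l) : ℚ)) * (k i : ℚ) * (k j : ℚ) := by
    have h1 : ∀ k : Fin m → ℕ,
        (∏ i, ((a i).choose (k i) : ℚ) * ((k i).choose (c i) : ℚ))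
          * (∑ i, x i * (k i : ℚ)) * (∑ i, y i * (k i : ℚ))
        = ∑ i, ∑ j, x i * y j *
            ((∏ l, ((a l).choose (k l) : ℚ) * ((k l).choose (c l) : ℚ)) * (k i : ℚ) * (k j : ℚ)) := by
      intro k
      simp only [Finset.mul_sum, Finset.sum_mul]
      rw [Finset.sum_comm]
      apply Finset.sum_congr rfl
      intro i _
      apply Finset.sum_congr rfl
      intro j _
      ring
    rw [Finset.sum_congr rfl fun k _ => h1 k]
    rw [Finset.sum_comm]
    apply Finset.sum_congr rfl
    intro i _
    rw [Finset.sum_comm]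
    apply Finset.sum_congr rfl
    intro j _
    rw [← Finset.mul_sum]
  rw [expand]
  simp only [Tfact m a c hca]
  rw [dsum m x y (fun i => ((a i : ℚ) + c i) / 2) (fun i => ((a i : ℚ) - c i) / 4)
    (∏ l, (2 : ℚ) ^ (a l - c l) * ((a l).choose (c l) : ℚ))]
  have hP : (∏ l, (2 : ℚ) ^ (a l - c l) * ((a l).choose (c l) : ℚ))
      = (2 : ℚ) ^ ((∑ i, a i) - ∑ i, c i) * ∏ i, ((a i).choose (c i) : ℚ) := by
    rw [Finset.prod_mul_distrib, Finset.prod_pow_eq_pow_sum,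
      Finset.sum_tsub_distrib Finset.univ (fun i _ => hca i)]
  have hx : ∑ i, x i * (((a i : ℚ) + c i) / 2)
      = ((∑ i, x i * (a i : ℚ)) + ∑ i, x i * (c i : ℚ)) / 2 := by
    rw [← Finset.sum_add_distrib, Finset.sum_div]
    exact Finset.sum_congr rfl fun i _ => by ring
  have hy : ∑ j, y j * (((a j : ℚ) + c j) / 2)
      = ((∑ i, y i * (a i : ℚ)) + ∑ i, y i * (c i : ℚ)) / 2 := by
    rw [← Finset.sum_add_distrib, Finset.sum_div]
    exact Finset.sum_congr rfl fun i _ => by ring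
  have hd : ∑ i, x i * y i * (((a i : ℚ) - c i) / 4)
      = ((∑ i, x i * y i * (a i : ℚ)) - ∑ i, x i * y i * (c i : ℚ)) / 4 := by
    rw [← Finset.sum_sub_distrib, Finset.sum_div]
    exact Finset.sum_congr rfl fun i _ => by ring
  rw [hx, hy, hd, hP]
  ring
end

section
/- For integer m ≥ 1, sequences of nonnegative integers a_i and c_i with c_i ≤ a_i, and rationals x_i, eight times the unrestricted sum over tuples (k_1,...,k_m) with 0 ≤ k_i ≤ a_i of [∏ C(a_i,k_i)C(k_i,c_i)] * (∑ x_i k_i^3) equals 2^{A_0-C_0} * [∏ C(a_i,c_i)] * [A_{1,3} + C_{1,3} + 3(A_{1,2} - C_{1,2} + S_{1,2} + S_{2,1})]. -/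
open Finset

lemma shiftlem (n : ℕ) (g : ℕ → ℚ) :
    ∑ j ∈ Finset.range (n+2), ((n+1).choose j : ℚ) * g j
      = ∑ j ∈ Finset.range (n+1), (n.choose j : ℚ) * (g j + g (j+1)) := by
  rw [Finset.sum_range_succ']
  have h : ∀ j : ℕ, (((n+1).choose (j+1) : ℚ)) = n.choose j + n.choose (j+1) := by
    intro j
    rw [Nat.choose_succ_succ]
    push_cast; ring
  simp_rw [h, add_mul]
  rw [Finset.sum_add_distrib]
  have h2 : ∑ j ∈ Finset.range (n+1), (n.choose (j+1):ℚ) * g (j+1)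
      = ∑ j ∈ Finset.range (n+1), (n.choose j:ℚ) * g j - (n.choose 0 : ℚ) * g 0 := by
    have h3 : ∑ j ∈ Finset.range (n+2), (n.choose j:ℚ)*g j
        = ∑ j ∈ Finset.range (n+1), (n.choose (j+1):ℚ)*g (j+1) + (n.choose 0:ℚ)*g 0 :=
      Finset.sum_range_succ' _ (n+1)
    rw [eq_sub_iff_add_eq, ← h3, Finset.sum_range_succ]
    simp [Nat.choose_succ_self]
  rw [h2]
  simp only [Nat.choose_zero_right, Nat.cast_one, one_mul, mul_add]
  rw [Finset.sum_add_distrib]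
  ring

lemma momT (n : ℕ) :
    (∑ j ∈ Finset.range (n+1), (n.choose j : ℚ) * 1 = 2^n) ∧
    (2 * ∑ j ∈ Finset.range (n+1), (n.choose j : ℚ) * j = n * 2^n) ∧
    (4 * ∑ j ∈ Finset.range (n+1), (n.choose j : ℚ) * (j:ℚ)^2 = n * (n+1) * 2^n) ∧
    (8 * ∑ j ∈ Finset.range (n+1), (n.choose j : ℚ) * (j:ℚ)^3 = (n:ℚ)^2 * (n+3) * 2^n) := by
  induction n with
  | zero => norm_num
  | succ n ih =>
    obtain ⟨i0, i1, i2, i3⟩ := ih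
    have s0 := shiftlem n (fun _ => (1:ℚ))
    have s1 := shiftlem n (fun j => (j:ℚ))
    have s2 := shiftlem n (fun j => (j:ℚ)^2)
    have s3 := shiftlem n (fun j => (j:ℚ)^3)
    push_cast at s0 s1 s2 s3
    have e0 : ∑ j ∈ Finset.range (n+1), (n.choose j:ℚ) * ((1:ℚ) + 1)
        = 2 * ∑ j ∈ Finset.range (n+1), (n.choose j:ℚ) * 1 := by
      rw [Finset.mul_sum]
      exact Finset.sum_congr rfl (fun j _ => by ring)
    have e1 : ∑ j ∈ Finset.range (n+1), (n.choose j:ℚ) * ((j:ℚ) + ((j:ℚ)+1))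
        = 2 * (∑ j ∈ Finset.range (n+1), (n.choose j:ℚ) * j) + ∑ j ∈ Finset.range (n+1), (n.choose j:ℚ) * 1 := by
      rw [Finset.mul_sum, ← Finset.sum_add_distrib]
      exact Finset.sum_congr rfl (fun j _ => by ring)
    have e2 : ∑ j ∈ Finset.range (n+1), (n.choose j:ℚ) * ((j:ℚ)^2 + ((j:ℚ)+1)^2)
        = 2 * (∑ j ∈ Finset.range (n+1), (n.choose j:ℚ) * (j:ℚ)^2) + 2 * (∑ j ∈ Finset.range (n+1), (n.choose j:ℚ) * j) + ∑ j ∈ Finset.range (n+1), (n.choose j:ℚ) * 1 := by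
      rw [Finset.mul_sum, Finset.mul_sum, ← Finset.sum_add_distrib, ← Finset.sum_add_distrib]
      exact Finset.sum_congr rfl (fun j _ => by ring)
    have e3 : ∑ j ∈ Finset.range (n+1), (n.choose j:ℚ) * ((j:ℚ)^3 + ((j:ℚ)+1)^3)
        = 2 * (∑ j ∈ Finset.range (n+1), (n.choose j:ℚ) * (j:ℚ)^3) + 3 * (∑ j ∈ Finset.range (n+1), (n.choose j:ℚ) * (j:ℚ)^2) + 3 * (∑ j ∈ Finset.range (n+1), (n.choose j:ℚ) * j) + ∑ j ∈ Finset.range (n+1), (n.choose j:ℚ) * 1 := by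
      rw [Finset.mul_sum, Finset.mul_sum, Finset.mul_sum, ← Finset.sum_add_distrib, ← Finset.sum_add_distrib, ← Finset.sum_add_distrib]
      exact Finset.sum_congr rfl (fun j _ => by ring)
    simp only [mul_one] at i0 e0 e1 e2 e3
    refine ⟨?_, ?_, ?_, ?_⟩
    · rw [show n+1+1 = n+2 from rfl, s0, e0]
      push_cast
      linear_combination 2 * i0
    · rw [show n+1+1 = n+2 from rfl, s1, e1]
      push_cast
      linear_combination 2 * i1 + 2 * i0
    · rw [show n+1+1 = n+2 from rfl, s2, e2]
      push_cast
      linear_combination 2 * i2 + 4 * i1 + 4 * i0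
    · rw [show n+1+1 = n+2 from rfl, s3, e3]
      push_cast
      linear_combination 2 * i3 + 6 * i2 + 12 * i1 + 8 * i0

lemma reindex (n c : ℕ) (g : ℕ → ℚ) :
    ∑ k ∈ Finset.range (n+c+1), ((n+c).choose k : ℚ) * ((k).choose c : ℚ) * g k
      = ((n+c).choose c : ℚ) * ∑ j ∈ Finset.range (n+1), (n.choose j : ℚ) * g (c+j) := by
  rw [show n+c+1 = c+(n+1) by ring, Finset.sum_range_add]
  have h1 : ∑ k ∈ Finset.range c, ((n+c).choose k : ℚ) * ((k).choose c : ℚ) * g k = 0 := by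
    apply Finset.sum_eq_zero
    intro k hk
    rw [Nat.choose_eq_zero_of_lt (Finset.mem_range.mp hk)]
    simp
  rw [h1, zero_add, Finset.mul_sum]
  apply Finset.sum_congr rfl
  intro j hj
  have hjn : j ≤ n := Nat.lt_succ_iff.mp (Finset.mem_range.mp hj)
  have key : (n+c).choose (c+j) * (c+j).choose c = (n+c).choose c * n.choose j := by
    have := Nat.choose_mul (n := n+c) (k := c+j) (s := c) (Nat.le_add_right c j)
    simpa [Nat.add_sub_cancel_left, Nat.add_sub_cancel] using this
  have keyq : ((n+c).choose (c+j) : ℚ) * ((c+j).choose c : ℚ) = ((n+c).choose c : ℚ) * (n.choose j : ℚ) := by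
    exact_mod_cast congrArg (Nat.cast : ℕ → ℚ) key
  rw [keyq, mul_assoc]

lemma S0lem (a c : ℕ) (h : c ≤ a) :
    ∑ k ∈ Finset.range (a+1), (a.choose k : ℚ) * (k.choose c : ℚ)
      = (a.choose c : ℚ) * 2^(a-c) := by
  obtain ⟨n, rfl⟩ : ∃ n, a = n + c := ⟨a - c, by omega⟩
  have h0 := (momT n).1
  simp only [mul_one] at h0
  have := reindex n c (fun _ => (1:ℚ))
  simp only [mul_one] at this
  calc ∑ k ∈ Finset.range (n+c+1), ((n+c).choose k : ℚ) * (k.choose c : ℚ)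
      = ((n+c).choose c : ℚ) * ∑ j ∈ Finset.range (n+1), (n.choose j : ℚ) := this
    _ = ((n+c).choose c : ℚ) * 2^(n+c-c) := by rw [h0, Nat.add_sub_cancel]

lemma S3lem (a c : ℕ) (h : c ≤ a) :
    8 * ∑ k ∈ Finset.range (a+1), (a.choose k : ℚ) * (k.choose c : ℚ) * (k:ℚ)^3
      = (a.choose c : ℚ) * 2^(a-c) *
        ((a:ℚ)^3 + (c:ℚ)^3 + 3*((a:ℚ)^2 - (c:ℚ)^2 + (a:ℚ)*(c:ℚ)^2 + (a:ℚ)^2*(c:ℚ))) := by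
  obtain ⟨n, rfl⟩ : ∃ n, a = n + c := ⟨a - c, by omega⟩
  obtain ⟨t0, t1, t2, t3⟩ := momT n
  simp only [mul_one] at t0
  have hre := reindex n c (fun k => (k:ℚ)^3)
  rw [hre, Nat.add_sub_cancel]
  have exp : ∑ j ∈ Finset.range (n+1), (n.choose j : ℚ) * ((c+j : ℕ) : ℚ)^3
      = (c:ℚ)^3 * ∑ j ∈ Finset.range (n+1), (n.choose j : ℚ)
        + 3*(c:ℚ)^2 * ∑ j ∈ Finset.range (n+1), (n.choose j : ℚ) * j
        + 3*(c:ℚ) * ∑ j ∈ Finset.range (n+1), (n.choose j : ℚ) * (j:ℚ)^2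
        + ∑ j ∈ Finset.range (n+1), (n.choose j : ℚ) * (j:ℚ)^3 := by
    rw [Finset.mul_sum, Finset.mul_sum, Finset.mul_sum, ← Finset.sum_add_distrib,
      ← Finset.sum_add_distrib, ← Finset.sum_add_distrib]
    apply Finset.sum_congr rfl
    intro j _
    push_cast
    ring
  rw [exp]
  push_cast
  linear_combination ((n+c).choose c : ℚ) *
    (t3 + 6*(c:ℚ)*t2 + 12*(c:ℚ)^2*t1 + 8*(c:ℚ)^3*t0)


theorem stmt19 (m : ℕ) (hm : 1 ≤ m) (a c : Fin m → ℕ) (hca : ∀ i, c i ≤ a i)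
    (x : Fin m → ℚ) :
    8 * (∑ k ∈ Fintype.piFinset (fun i => Finset.range (a i + 1)), (∏ i, ((a i).choose (k i) : ℚ) * ((k i).choose (c i) : ℚ)) * (∑ i, x i * (k i : ℚ) ^ 3))
      = (2 : ℚ) ^ ((∑ i, a i) - ∑ i, c i) * (∏ i, ((a i).choose (c i) : ℚ)) * ((∑ i, x i * (a i : ℚ) ^ 3) + (∑ i, x i * (c i : ℚ) ^ 3) + 3 * ((∑ i, x i * (a i : ℚ) ^ 2) - (∑ i, x i * (c i : ℚ) ^ 2) + (∑ i, x i * (a i : ℚ) * (c i : ℚ) ^ 2) + (∑ i, x i * (a i : ℚ) ^ 2 * (c i : ℚ)))) := by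
  classical
  set W : Fin m → ℕ → ℚ := fun j t => ((a j).choose t : ℚ) * ((t).choose (c j) : ℚ) with hW
  set F : Fin m → ℚ := fun j => ((a j).choose (c j) : ℚ) * 2^(a j - c j) with hF
  set Q : Fin m → ℚ := fun i => (a i : ℚ)^3 + (c i : ℚ)^3 + 3*((a i : ℚ)^2 - (c i : ℚ)^2 + (a i : ℚ)*(c i : ℚ)^2 + (a i : ℚ)^2*(c i : ℚ)) with hQ
  -- per-coordinate sums
  have h0 : ∀ j, ∑ v ∈ Finset.range (a j + 1), W j v
      = F j := fun j => S0lem (a j) (c j) (hca j)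
  have h8 : ∀ i, 8 * ∑ v ∈ Finset.range (a i + 1), W i v * (v:ℚ)^3
      = F i * Q i := fun i => S3lem (a i) (c i) (hca i)
  -- step A
  have hA : ∀ i : Fin m,
      ∑ k ∈ Fintype.piFinset (fun i => Finset.range (a i + 1)), (∏ j, W j (k j)) * ((k i : ℚ))^3
        = (∑ v ∈ Finset.range (a i + 1), W i v * (v:ℚ)^3)
          * ∏ j ∈ Finset.univ.erase i, (∑ v ∈ Finset.range (a j + 1), W j v) := by
    intro i
    have hg := Finset.prod_univ_sum (fun j => Finset.range (a j + 1))
        (fun j t => if j = i then W j t * (t:ℚ)^3 else W j t)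
    have h1 : ∀ k : Fin m → ℕ, (∏ j, (if j = i then W j (k j) * ((k j:ℚ))^3 else W j (k j)))
        = (∏ j, W j (k j)) * ((k i:ℚ))^3 := by
      intro k
      rw [← Finset.mul_prod_erase Finset.univ _ (Finset.mem_univ i),
          ← Finset.mul_prod_erase Finset.univ (fun j => W j (k j)) (Finset.mem_univ i)]
      simp only [eq_self_iff_true, if_true]
      rw [Finset.prod_congr rfl (fun j hj => by rw [if_neg (Finset.ne_of_mem_erase hj)])]
      ring
    have h2 : ∑ k ∈ Fintype.piFinset (fun i => Finset.range (a i + 1)), (∏ j, W j (k j)) * ((k i : ℚ))^3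
        = ∑ k ∈ Fintype.piFinset (fun i => Finset.range (a i + 1)),
            ∏ j, (if j = i then W j (k j) * ((k j:ℚ))^3 else W j (k j)) :=
      Finset.sum_congr rfl (fun k _ => (h1 k).symm)
    rw [h2, ← hg, ← Finset.mul_prod_erase Finset.univ _ (Finset.mem_univ i)]
    simp only [eq_self_iff_true, if_true]
    congr 1
    apply Finset.prod_congr rfl
    intro j hj
    exact Finset.sum_congr rfl (fun t _ => by rw [if_neg (Finset.ne_of_mem_erase hj)])
  -- step B : swap sums
  have hB : ∑ k ∈ Fintype.piFinset (fun i => Finset.range (a i + 1)), (∏ j, W j (k j)) * (∑ i, x i * (k i : ℚ)^3)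
      = ∑ i, x i * ((∑ v ∈ Finset.range (a i + 1), W i v * (v:ℚ)^3)
          * ∏ j ∈ Finset.univ.erase i, (∑ v ∈ Finset.range (a j + 1), W j v)) := by
    simp_rw [Finset.mul_sum]
    rw [Finset.sum_comm]
    apply Finset.sum_congr rfl
    intro i _
    rw [← hA i, Finset.mul_sum]
    apply Finset.sum_congr rfl
    intro k _
    ring
  have key : 8 * (∑ k ∈ Fintype.piFinset (fun i => Finset.range (a i + 1)), (∏ j, W j (k j)) * (∑ i, x i * (k i : ℚ)^3))
      = (∏ j, F j) * ∑ i, x i * Q i := by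
    rw [hB, Finset.mul_sum, Finset.mul_sum]
    apply Finset.sum_congr rfl
    intro i _
    have := h8 i
    calc 8 * (x i * ((∑ v ∈ Finset.range (a i + 1), W i v * (v:ℚ)^3)
          * ∏ j ∈ Finset.univ.erase i, (∑ v ∈ Finset.range (a j + 1), W j v)))
        = x i * ((8 * ∑ v ∈ Finset.range (a i + 1), W i v * (v:ℚ)^3)
          * ∏ j ∈ Finset.univ.erase i, (∑ v ∈ Finset.range (a j + 1), W j v)) := by ring
      _ = x i * ((F i * Q i)
          * ∏ j ∈ Finset.univ.erase i, F j) := by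
          rw [h8 i, Finset.prod_congr rfl (fun j _ => h0 j)]
      _ = (F i * ∏ j ∈ Finset.univ.erase i, F j) * (x i * Q i) := by ring
      _ = (∏ j, F j) * (x i * Q i) := by
          rw [Finset.mul_prod_erase Finset.univ F (Finset.mem_univ i)]
  rw [key]
  -- product splits
  have hprod : (∏ j, F j)
      = (2:ℚ) ^ ((∑ i, a i) - ∑ i, c i) * ∏ i, ((a i).choose (c i) : ℚ) := by
    simp only [hF]
    rw [Finset.prod_mul_distrib, Finset.prod_pow_eq_pow_sum]
    have hsum : ∑ i, (a i - c i) = (∑ i, a i) - ∑ i, c i := by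
      have h1 : (∑ i, (a i - c i)) + ∑ i, c i = ∑ i, a i := by
        rw [← Finset.sum_add_distrib]
        exact Finset.sum_congr rfl (fun i _ => by have := hca i; omega)
      omega
    rw [hsum]; ring
  have hbr : ∑ i, x i * Q i
      = (∑ i, x i * (a i : ℚ) ^ 3) + (∑ i, x i * (c i : ℚ) ^ 3) + 3 * ((∑ i, x i * (a i : ℚ) ^ 2) - (∑ i, x i * (c i : ℚ) ^ 2) + (∑ i, x i * (a i : ℚ) * (c i : ℚ) ^ 2) + (∑ i, x i * (a i : ℚ) ^ 2 * (c i : ℚ))) := by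
    have step : ∑ i, x i * Q i = ∑ i, (x i * (a i:ℚ)^3 + x i * (c i:ℚ)^3
        + (3*(x i * (a i:ℚ)^2) - 3*(x i * (c i:ℚ)^2) + 3*(x i * (a i:ℚ)*(c i:ℚ)^2)
          + 3*(x i * (a i:ℚ)^2*(c i:ℚ)))) :=
      Finset.sum_congr rfl (fun i _ => by simp only [hQ]; ring)
    rw [step]
    simp only [Finset.sum_add_distrib, Finset.sum_sub_distrib, ← Finset.mul_sum]
    ring
  rw [hprod, hbr]
end
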